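/- arXiv:1904.01907 — 6 statements merged into one kernel-verified Lean document; each statement's English description precedes it below -/
import Mathlib

section
/- Let B be a bilinear form on an n-dimensional F_2-vector space V, let rad_r(B) = {y ∈ V : B(x,y)=0 for all x ∈ V} be its right radical, and let h = n − dim(rad_r(B)). Let Ω be an algebraically closed field of characteristic 2 and let J be the ideal of Ω[x_1,…,x_n,y_1,…,y_n] generated by the polynomials B(x,y), B(x,y²), …, B(x,y^(2^(h−1))), where y^(2^l) denotes the tuple (y_1^(2^l),…,y_n^(2^l)). Then the zero set of J in V_Ω × V_Ω equals the union over all F_2-subspaces W ⊆ V of W_Ω^⊥ × W_Ω, where W_Ω^⊥ = {x ∈ V_Ω : B(x,y)=0 for all y ∈ W_Ω}. -/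
/-!
Let `F` be the coordinatewise Frobenius `z ↦ (z_i ^ 2)_i` on `Ωⁿ` and `A` the matrix of `B` over
`Ω`, so that `B(x, y^(2^l)) = x ⬝ A Fˡ y`. Since `A` has entries in `𝔽₂`, `A F = F A`; hence the
vectors `Fˡ (A y)` lie in the range of `A`, of dimension `rank B = h`, so the first `h` of them span
an `F`-stable space `P` containing all of them, and `x ⟂ P`. Then `T = A⁻¹ P` is `F`-stable, contains
`y`, and `x ⟂ A T`. An `F`-stable subspace is spanned by its `F`-fixed vectors, i.e. by vectors with
coordinates in `𝔽₂`, so `T = W_Ω` for some `W`. Conversely `W_Ω` is `F`-stable, which gives the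
other inclusion.

The descent statement holds for any injective Frobenius-semilinear map `φ` of a finite-dimensional
space over an algebraically closed field, by induction on the dimension: a minimal relation
`φᵏ⁺¹ v = ∑ cᵢ φⁱ v` turns the search for a nonzero fixed vector into one polynomial equation, and
fixed vectors of the quotient by a fixed line `K w` lift by solving `s ^ p + c = s`.
-/

/-- The right radical of the bilinear form on `(ZMod 2)ⁿ` given by a matrix `Bm`. -/
noncomputable def radRight (n : ℕ) (Bm : Matrix (Fin n) (Fin n) (ZMod 2)) :
    Submodule (ZMod 2) (Fin n → ZMod 2) where
  carrier := {y | ∀ x : Fin n → ZMod 2, ∑ i, ∑ j, x i * Bm i j * y j = 0}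
  add_mem' := by
    intro a b ha hb x
    have h1 := ha x
    have h2 := hb x
    simp only [Pi.add_apply, mul_add, Finset.sum_add_distrib]
    rw [h1, h2, add_zero]
  zero_mem' := by
    intro x
    simp
  smul_mem' := by
    intro c y hy x
    simp only [Set.mem_setOf_eq, Pi.smul_apply, smul_eq_mul]
    have : (∑ i, ∑ j, x i * Bm i j * (c * y j)) = c * ∑ i, ∑ j, x i * Bm i j * y j := by
      rw [Finset.mul_sum]
      exact Finset.sum_congr rfl fun i _ => by
        rw [Finset.mul_sum]
        exact Finset.sum_congr rfl fun j _ => by ring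
    rw [this, hy x, mul_zero]

open Module Submodule Polynomial Matrix

def spanPrefix (K : Type*) {M : Type*} [Field K] [AddCommGroup M] [Module K M] (v : ℕ → M)
    (m : ℕ) : Submodule K M :=
  span K (Set.range fun i : Fin m => v i)

section SpanPrefix

variable {K M : Type*} [Field K] [AddCommGroup M] [Module K M]

theorem mem_spanPrefix_of_lt (v : ℕ → M) {i m : ℕ} (h : i < m) : v i ∈ spanPrefix K v m :=
  subset_span ⟨⟨i, h⟩, rfl⟩

theorem spanPrefix_mono (v : ℕ → M) {m m' : ℕ} (h : m ≤ m') :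
    spanPrefix K v m ≤ spanPrefix K v m' :=
  span_le.mpr <| Set.range_subset_iff.mpr fun i => mem_spanPrefix_of_lt v (i.2.trans_le h)

theorem mem_spanPrefix_iff (v : ℕ → M) (m : ℕ) (x : M) :
    x ∈ spanPrefix K v m ↔ ∃ c : ℕ → K, ∑ i ∈ Finset.range m, c i • v i = x := by
  constructor
  · intro hx
    obtain ⟨c, rfl⟩ := (mem_span_range_iff_exists_fun K).mp hx
    refine ⟨fun i => if h : i < m then c ⟨i, h⟩ else 0, ?_⟩
    rw [Finset.sum_range]
    simp
  · rintro ⟨c, rfl⟩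
    exact sum_mem fun i hi => smul_mem _ _ (mem_spanPrefix_of_lt v (Finset.mem_range.mp hi))

theorem linearIndependent_of_forall_notMem_spanPrefix (v : ℕ → M) (k : ℕ)
    (h : ∀ i < k, v i ∉ spanPrefix K v i) : LinearIndependent K fun i : Fin k => v i := by
  induction k with
  | zero => exact linearIndependent_empty_type
  | succ k ih =>
    have hv : (fun i : Fin (k + 1) => v i) = Fin.snoc (fun i : Fin k => v i) (v k) := by
      funext i
      refine Fin.lastCases ?_ (fun j => ?_) i <;> simp
    rw [hv, linearIndependent_finSnoc]
    exact ⟨ih fun i hi => h i (by omega), h k k.lt_succ_self⟩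

theorem exists_mem_spanPrefix_of_forall_mem (v : ℕ → M) (R : Submodule K M)
    [FiniteDimensional K R] (hv : ∀ i, v i ∈ R) :
    ∃ m ≤ finrank K R, v m ∈ spanPrefix K v m ∧ ∀ i < m, v i ∉ spanPrefix K v i := by
  classical
  have card_le {k : ℕ} (h : ∀ i < k, v i ∉ spanPrefix K v i) : k ≤ finrank K R := by
    have hli : LinearIndependent K fun i : Fin k => (⟨v i, hv i⟩ : R) :=
      .of_comp R.subtype (linearIndependent_of_forall_notMem_spanPrefix v k h)
    simpa using hli.fintype_card_le_finrank
  have hex : ∃ m, v m ∈ spanPrefix K v m := by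
    by_contra! hnone
    have := card_le (k := finrank K R + 1) fun i _ => hnone i
    omega
  exact ⟨Nat.find hex, card_le fun i hi => Nat.find_min hex hi, Nat.find_spec hex,
    fun i hi => Nat.find_min hex hi⟩

variable {σ : K →+* K}

theorem iterate_mem_spanPrefix_of_iterate_mem (φ : M →ₛₗ[σ] M) (u : M) {m : ℕ}
    (hm : φ^[m] u ∈ spanPrefix K (φ^[·] u) m) (k : ℕ) : φ^[k] u ∈ spanPrefix K (φ^[·] u) m := by
  have hstable : spanPrefix K (φ^[·] u) m ≤ (spanPrefix K (φ^[·] u) m).comap φ := by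
    refine span_le.mpr ?_
    rintro _ ⟨i, rfl⟩
    rw [SetLike.mem_coe, mem_comap, ← Function.iterate_succ_apply' φ]
    rcases (Nat.succ_le_of_lt i.2).lt_or_eq with h | h
    · exact mem_spanPrefix_of_lt _ h
    · rw [h]; exact hm
  have hu : u ∈ spanPrefix K (φ^[·] u) m := by
    rcases Nat.eq_zero_or_pos m with rfl | hpos
    · exact hm
    · exact mem_spanPrefix_of_lt (φ^[·] u) hpos
  exact Set.MapsTo.iterate (f := φ) (s := spanPrefix K (φ^[·] u) m) (fun _ hx => hstable hx) k hu

theorem iterate_mem_spanPrefix_of_finrank_le (φ : M →ₛₗ[σ] M) (u : M) (R : Submodule K M)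
    [FiniteDimensional K R] (hR : ∀ l, φ^[l] u ∈ R) {d : ℕ} (hd : finrank K R ≤ d) (k : ℕ) :
    φ^[k] u ∈ spanPrefix K (φ^[·] u) d := by
  obtain ⟨m, hmR, hm, -⟩ := exists_mem_spanPrefix_of_forall_mem (φ^[·] u) R hR
  exact spanPrefix_mono _ (hmR.trans hd) (iterate_mem_spanPrefix_of_iterate_mem φ u hm k)

end SpanPrefix

section FrobeniusCoeffPoly

variable {K : Type*} [Field K]

/-- If `φᵏ⁺¹ v = ∑_{i ≤ k} cᵢ φⁱ v` for a `p`-semilinear `φ`, then `∑_{i ≤ k} aᵢ φⁱ v` is fixed by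
`φ` as soon as `a₀ = c₀ aₖ ^ p` and `aᵢ₊₁ = aᵢ ^ p + cᵢ₊₁ aₖ ^ p`; `frobeniusCoeffPoly p c i` is
`aᵢ` as a polynomial in `aₖ`. -/
noncomputable def frobeniusCoeffPoly (p : ℕ) (c : ℕ → K) : ℕ → K[X]
  | 0 => C (c 0) * X ^ p
  | i + 1 => frobeniusCoeffPoly p c i ^ p + C (c (i + 1)) * X ^ p

theorem natDegree_frobeniusCoeffPoly {p : ℕ} (hp : 1 < p) {c : ℕ → K} (hc : c 0 ≠ 0) (i : ℕ) :
    (frobeniusCoeffPoly p c i).natDegree = p ^ (i + 1) := by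
  induction i with
  | zero => simpa [frobeniusCoeffPoly] using natDegree_C_mul_X_pow p _ hc
  | succ i ih =>
    have hlt : (C (c (i + 1)) * X ^ p).natDegree < (frobeniusCoeffPoly p c i ^ p).natDegree := by
      rw [natDegree_pow, ih, ← pow_succ']
      calc _ ≤ p ^ 1 := (natDegree_C_mul_X_pow_le _ _).trans_eq (pow_one p).symm
        _ < p ^ (i + 1 + 1) := Nat.pow_lt_pow_right hp (by omega)
    rw [frobeniusCoeffPoly, natDegree_add_eq_left_of_natDegree_lt hlt, natDegree_pow, ih]
    ring

theorem X_pow_dvd_frobeniusCoeffPoly {p : ℕ} (hp : p ≠ 0) (c : ℕ → K) (i : ℕ) :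
    X ^ p ∣ frobeniusCoeffPoly p c i := by
  induction i with
  | zero => exact dvd_mul_left _ _
  | succ i ih => exact dvd_add (ih.trans (dvd_pow_self _ hp)) (dvd_mul_left _ _)

variable [IsAlgClosed K]

theorem Polynomial.exists_ne_zero_eval_eq_self {P : K[X]} (hP : P ≠ 0) (hdvd : X ^ 2 ∣ P) :
    ∃ t ≠ 0, P.eval t = t := by
  obtain ⟨Q, rfl⟩ := hdvd
  have hQ : Q ≠ 0 := by rintro rfl; simp at hP
  have hdeg : (X * Q - C 1).degree ≠ 0 :=
    (natDegree_pos_iff_degree_pos.mp <| by rw [natDegree_sub_C, natDegree_X_mul hQ]; omega).ne'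
  obtain ⟨t, ht⟩ := IsAlgClosed.exists_root _ hdeg
  have ht' : t * Q.eval t = 1 := by simpa [sub_eq_zero] using ht
  exact ⟨t, left_ne_zero_of_mul_eq_one ht', by simp; linear_combination t * ht'⟩

theorem exists_pow_add_eq_self {n : ℕ} (hn : 1 < n) (c : K) : ∃ s : K, s ^ n + c = s := by
  have hdeg : (X ^ n - X + C c : K[X]).degree ≠ 0 :=
    (natDegree_pos_iff_degree_pos.mp <| by
      rw [natDegree_add_C, natDegree_sub_eq_left_of_natDegree_lt] <;> simp <;> omega).ne'
  obtain ⟨s, hs⟩ := IsAlgClosed.exists_root _ hdeg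
  exact ⟨s, by simp at hs; linear_combination hs⟩

end FrobeniusCoeffPoly

theorem map_sum_smul_eq_self_of_coeff_rec {K M : Type*} [Field K] {p : ℕ} [ExpChar K p]
    [AddCommGroup M] [Module K M] (φ : M →ₛₗ[frobenius K p] M) (e : ℕ → M)
    (he : ∀ i, φ (e i) = e (i + 1)) {c a : ℕ → K} {k : ℕ}
    (hc : ∑ i ∈ Finset.range (k + 1), c i • e i = e (k + 1))
    (ha0 : a 0 = c 0 * a k ^ p) (ha : ∀ i, a (i + 1) = a i ^ p + c (i + 1) * a k ^ p) :
    φ (∑ i ∈ Finset.range (k + 1), a i • e i) = ∑ i ∈ Finset.range (k + 1), a i • e i := by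
  calc φ (∑ i ∈ Finset.range (k + 1), a i • e i)
      = ∑ i ∈ Finset.range k, a i ^ p • e (i + 1) + a k ^ p • e (k + 1) := by
        simp [map_sum, he, frobenius_def, Finset.sum_range_succ]
    _ = ∑ i ∈ Finset.range (k + 1), a i • e i := by
        rw [← hc, Finset.smul_sum, Finset.sum_range_succ', Finset.sum_range_succ' _ k]
        simp only [smul_smul, ha, ha0, add_smul, Finset.sum_add_distrib]
        simp only [mul_comm]
        abel

section FrobeniusDescent

variable {K : Type*} [Field K] [IsAlgClosed K] {p : ℕ} [Fact p.Prime] [CharP K p]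
  {M : Type*} [AddCommGroup M] [Module K M] {φ : M →ₛₗ[frobenius K p] M}

theorem injective_mapQ_span_singleton (hφ : Function.Injective φ) {w : M} (hw : φ w = w)
    (hN : K ∙ w ≤ (K ∙ w).comap φ) : Function.Injective ((K ∙ w).mapQ (K ∙ w) φ hN) := by
  refine (injective_iff_map_eq_zero _).mpr fun q hq => ?_
  induction q using Submodule.Quotient.induction_on with | _ z => ?_
  rw [mapQ_apply, Quotient.mk_eq_zero, mem_span_singleton] at hq
  obtain ⟨c, hc⟩ := hq
  obtain ⟨s, rfl⟩ := surjective_frobenius K p c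
  rw [← hw, ← map_smulₛₗ] at hc
  rw [Quotient.mk_eq_zero, ← hφ hc]
  exact smul_mem _ _ (mem_span_singleton_self w)

theorem exists_mk_eq_of_mapQ_eq_self {w : M} (hw : φ w = w)
    (hN : K ∙ w ≤ (K ∙ w).comap φ) {q : M ⧸ (K ∙ w)} (hq : (K ∙ w).mapQ (K ∙ w) φ hN q = q) :
    ∃ z, φ z = z ∧ (K ∙ w).mkQ z = q := by
  induction q using Submodule.Quotient.induction_on with | _ z => ?_
  rw [mapQ_apply, Submodule.Quotient.eq, mem_span_singleton] at hq
  obtain ⟨c, hc⟩ := hq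
  obtain ⟨s, hs⟩ := exists_pow_add_eq_self (Fact.out : p.Prime).one_lt c
  refine ⟨z + s • w, ?_, ?_⟩
  · rw [map_add, map_smulₛₗ, hw, frobenius_def, eq_add_of_sub_eq' hc.symm]
    nth_rw 2 [← hs]
    rw [add_smul]
    abel
  · simp

variable [FiniteDimensional K M]

theorem exists_ne_zero_map_eq_self [Nontrivial M] (hφ : Function.Injective φ) :
    ∃ w : M, w ≠ 0 ∧ φ w = w := by
  obtain ⟨v, hv⟩ := exists_ne (0 : M)
  set e : ℕ → M := (φ^[·] v)
  have he (i : ℕ) : φ (e i) = e (i + 1) := (Function.iterate_succ_apply' φ i v).symm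
  obtain ⟨m, -, hm, hmin⟩ :=
    exists_mem_spanPrefix_of_forall_mem e (⊤ : Submodule K M) fun _ => mem_top
  obtain ⟨k, rfl⟩ : ∃ k, m = k + 1 := Nat.exists_eq_succ_of_ne_zero <| by
    rintro rfl
    simp [spanPrefix, e] at hm
    exact hv hm
  obtain ⟨c, hc⟩ := (mem_spanPrefix_iff e _ _).mp hm
  have hc0 : c 0 ≠ 0 := by
    intro hc0
    choose s hs using fun i => IsAlgClosed.exists_pow_nat_eq (c (i + 1)) (Fact.out : p.Prime).pos
    apply hmin k k.lt_succ_self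
    rw [mem_spanPrefix_iff]
    refine ⟨s, hφ ?_⟩
    rw [he, ← hc, Finset.sum_range_succ', hc0, zero_smul, add_zero, map_sum]
    simp [he, frobenius_def, hs]
  have hp := (Fact.out : p.Prime).two_le
  obtain ⟨t, ht0, ht⟩ := Polynomial.exists_ne_zero_eval_eq_self
    (ne_zero_of_natDegree_gt (n := 0) (by rw [natDegree_frobeniusCoeffPoly hp hc0]; positivity))
    ((pow_dvd_pow X hp).trans (X_pow_dvd_frobeniusCoeffPoly (by omega) c k))
  set a : ℕ → K := fun i => (frobeniusCoeffPoly p c i).eval t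
  have hak : a k = t := ht
  refine ⟨∑ i ∈ Finset.range (k + 1), a i • e i, fun h0 => ?_,
    map_sum_smul_eq_self_of_coeff_rec φ e he hc ?_ fun i => ?_⟩
  · apply hmin k k.lt_succ_self
    rw [mem_spanPrefix_iff]
    refine ⟨fun i => -(t⁻¹ * a i), ?_⟩
    rw [Finset.sum_range_succ, hak] at h0
    simp_rw [neg_smul, ← smul_smul, Finset.sum_neg_distrib, ← Finset.smul_sum,
      eq_neg_of_add_eq_zero_left h0, smul_neg, neg_neg, smul_smul, inv_mul_cancel₀ ht0, one_smul]
  · simp [a, frobeniusCoeffPoly, hak]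
  · simp [a, frobeniusCoeffPoly, hak]

theorem span_setOf_map_eq_self_eq_top (hφ : Function.Injective φ) :
    span K {z : M | φ z = z} = ⊤ := by
  induction hd : finrank K M using Nat.strong_induction_on generalizing M with | _ d ih => ?_
  rcases subsingleton_or_nontrivial M with hM | hM
  · exact Subsingleton.elim _ _
  obtain ⟨w, hw0, hw⟩ := exists_ne_zero_map_eq_self hφ
  have hN : K ∙ w ≤ (K ∙ w).comap φ := by
    rw [span_singleton_le_iff_mem, mem_comap, hw]
    exact mem_span_singleton_self w
  have hlt : finrank K (M ⧸ K ∙ w) < d := by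
    have := (K ∙ w).finrank_quotient_add_finrank
    rw [finrank_span_singleton hw0] at this
    omega
  have hquot := ih _ hlt (injective_mapQ_span_singleton hφ hw hN) rfl
  have hwfix : K ∙ w ≤ span K {z : M | φ z = z} :=
    (span_singleton_le_iff_mem _ _).mpr (subset_span hw)
  refine eq_top_iff.mpr fun z _ => ?_
  have hz : (K ∙ w).mkQ z ∈ (span K {z : M | φ z = z}).map (K ∙ w).mkQ := by
    rw [map_span]
    refine span_mono ?_ (hquot ▸ mem_top)
    intro q hq
    obtain ⟨z', hz', rfl⟩ := exists_mk_eq_of_mapQ_eq_self hw hN hq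
    exact ⟨z', hz', rfl⟩
  rwa [← mem_comap, comap_map_mkQ, sup_eq_right.mpr hwfix] at hz

theorem le_span_inter_setOf_map_eq_self (hφ : Function.Injective φ) {T : Submodule K M}
    (hT : T ≤ T.comap φ) : T ≤ span K (T ∩ {z | φ z = z}) := by
  let ψ : T →ₛₗ[frobenius K p] T := φ.restrict hT
  have hψ : Function.Injective ψ := fun a b hab => Subtype.ext (hφ congr(($hab : M)))
  calc T = (⊤ : Submodule K T).map T.subtype := T.map_subtype_top.symm
    _ = span K (T.subtype '' {z | ψ z = z}) := by
      rw [← span_setOf_map_eq_self_eq_top hψ, map_span]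
    _ ≤ span K (T ∩ {z | φ z = z}) := span_mono <| by
      rintro _ ⟨z, hz, rfl⟩
      exact ⟨z.2, congr(($hz : M))⟩

end FrobeniusDescent

section PiFrobenius

variable (ι K : Type*) [CommSemiring K] (p : ℕ) [ExpChar K p]

def piFrobenius : (ι → K) →ₛₗ[frobenius K p] (ι → K) where
  toFun z i := frobenius K p (z i)
  map_add' _ _ := funext fun _ => map_add _ _ _
  map_smul' _ _ := funext fun _ => map_mul _ _ _

variable {ι K p}

@[simp]
theorem piFrobenius_apply (z : ι → K) (i : ι) : piFrobenius ι K p z i = z i ^ p := rfl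

theorem iterate_piFrobenius_apply (z : ι → K) (l : ℕ) (i : ι) :
    (piFrobenius ι K p)^[l] z i = z i ^ p ^ l := by
  induction l generalizing z with
  | zero => simp
  | succ l ih => rw [Function.iterate_succ_apply', piFrobenius_apply, ih, ← pow_mul, ← pow_succ]

end PiFrobenius

theorem piFrobenius_injective {ι K : Type*} [CommRing K] [IsReduced K] {p : ℕ} [ExpChar K p] :
    Function.Injective (piFrobenius ι K p) :=
  fun _ _ h => funext fun i => frobenius_inj K p (congr_fun h i)

def algebraMapPi (ι R K : Type*) [CommSemiring R] [Semiring K] [Algebra R K] :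
    (ι → R) →ₗ[R] (ι → K) :=
  LinearMap.compLeft (Algebra.linearMap R K) ι

theorem coe_algebraMapPi (ι R K : Type*) [CommSemiring R] [Semiring K] [Algebra R K] :
    ⇑(algebraMapPi ι R K) = fun w i => algebraMap R K (w i) := rfl

section PrimeField

variable {p : ℕ} [Fact p.Prime] {K : Type*} [Field K] [Algebra (ZMod p) K]

theorem algebraMap_zmod_pow_char (a : ZMod p) :
    algebraMap (ZMod p) K a ^ p = algebraMap (ZMod p) K a := by
  rw [← map_pow, ZMod.pow_card]

variable [CharP K p]

theorem exists_algebraMap_zmod_eq_of_pow_char_eq_self {x : K} (hx : x ^ p = x) :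
    ∃ a : ZMod p, algebraMap (ZMod p) K a = x := by
  have hx := (Subfield.mem_bot_iff_pow_eq_self K p).mpr hx
  rw [← ZMod.fieldRange_castHom_eq_bot p] at hx
  obtain ⟨a, rfl⟩ := hx
  exact ⟨a, congr($(RingHom.ext_zmod _ _) a)⟩

theorem mulVec_piFrobenius {m n : Type*} [Fintype n] (A : Matrix m n (ZMod p)) (z : n → K) :
    A.map (algebraMap (ZMod p) K) *ᵥ piFrobenius n K p z
      = piFrobenius m K p (A.map (algebraMap (ZMod p) K) *ᵥ z) := by
  ext i
  rw [piFrobenius_apply, ← frobenius_def, RingHom.map_mulVec, Matrix.map_map]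
  congr 2
  ext a
  exact (algebraMap_zmod_pow_char _).symm

theorem iterate_piFrobenius_mulVec {m n : Type*} [Fintype n] (A : Matrix m n (ZMod p))
    (y : n → K) (l : ℕ) :
    (piFrobenius m K p)^[l] (A.map (algebraMap (ZMod p) K) *ᵥ y)
      = A.map (algebraMap (ZMod p) K) *ᵥ (piFrobenius n K p)^[l] y := by
  induction l with
  | zero => rfl
  | succ l ih =>
    rw [Function.iterate_succ_apply', Function.iterate_succ_apply', ih, mulVec_piFrobenius]

variable {ι : Type*}

theorem piFrobenius_algebraMapPi (w : ι → ZMod p) :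
    piFrobenius ι K p (algebraMapPi ι (ZMod p) K w) = algebraMapPi ι (ZMod p) K w :=
  funext fun i => algebraMap_zmod_pow_char (w i)

theorem exists_algebraMapPi_eq_of_piFrobenius_eq_self {z : ι → K}
    (hz : piFrobenius ι K p z = z) : ∃ w, algebraMapPi ι (ZMod p) K w = z := by
  choose w hw using fun i => exists_algebraMap_zmod_eq_of_pow_char_eq_self (congr_fun hz i)
  exact ⟨w, funext hw⟩

theorem span_algebraMapPi_le_comap_piFrobenius (S : Set (ι → ZMod p)) :
    span K (algebraMapPi ι (ZMod p) K '' S)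
      ≤ (span K (algebraMapPi ι (ZMod p) K '' S)).comap (piFrobenius ι K p) := by
  refine span_le.mpr ?_
  rintro _ ⟨w, hw, rfl⟩
  rw [SetLike.mem_coe, mem_comap, piFrobenius_algebraMapPi]
  exact subset_span ⟨w, hw, rfl⟩

theorem iterate_piFrobenius_mem_span_algebraMapPi (S : Set (ι → ZMod p)) {y : ι → K}
    (hy : y ∈ span K (algebraMapPi ι (ZMod p) K '' S)) (l : ℕ) :
    (piFrobenius ι K p)^[l] y ∈ span K (algebraMapPi ι (ZMod p) K '' S) :=
  Set.MapsTo.iterate (f := piFrobenius ι K p) (s := span K (algebraMapPi ι (ZMod p) K '' S))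
    (fun _ hz => span_algebraMapPi_le_comap_piFrobenius S hz) l hy

theorem span_algebraMapPi_comap_eq [Finite ι] [IsAlgClosed K] {T : Submodule K (ι → K)}
    (hT : T ≤ T.comap (piFrobenius ι K p)) :
    span K (algebraMapPi ι (ZMod p) K ''
      (T.restrictScalars (ZMod p)).comap (algebraMapPi ι (ZMod p) K)) = T := by
  refine le_antisymm (span_le.mpr ?_)
    ((le_span_inter_setOf_map_eq_self piFrobenius_injective hT).trans (span_mono ?_))
  · rintro _ ⟨w, hw, rfl⟩
    exact hw
  · rintro z ⟨hzT, hz⟩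
    obtain ⟨w, rfl⟩ := exists_algebraMapPi_eq_of_piFrobenius_eq_self hz
    exact ⟨w, hzT, rfl⟩

end PrimeField

theorem finrank_span_image_le {F L V M : Type*} [Field F] [Field L] [Algebra F L]
    [AddCommGroup V] [Module F V] [AddCommGroup M] [Module F M] [Module L M] [IsScalarTower F L M]
    (f : V →ₗ[F] M) (s : Set V) [FiniteDimensional F (span F s)] :
    finrank L (span L (f '' s)) ≤ finrank F (span F s) := by
  let b := Module.finBasis F (span F s)
  have hle : span L (f '' s) ≤ span L (Set.range fun i => f (b i)) := by
    refine span_le.mpr ?_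
    rintro _ ⟨x, hx, rfl⟩
    rw [← show ((⟨x, subset_span hx⟩ : span F s) : V) = x from rfl, ← b.sum_repr ⟨x, _⟩]
    simp only [coe_sum, Submodule.coe_smul, map_sum, map_smul]
    exact sum_mem fun i _ => smul_of_tower_mem _ _ (subset_span ⟨i, rfl⟩)
  have := FiniteDimensional.span_of_finite L (Set.finite_range fun i => f (b i))
  exact (Submodule.finrank_mono hle).trans ((finrank_range_le_card _).trans_eq (by simp))

theorem Matrix.rank_map_algebraMap_le {F L m n : Type*} [Field F] [Field L] [Algebra F L]
    [Fintype m] [Fintype n] (A : Matrix m n F) : (A.map (algebraMap F L)).rank ≤ A.rank := by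
  rw [rank_eq_finrank_span_cols, rank_eq_finrank_span_cols]
  have : Set.range (A.map (algebraMap F L)).col = algebraMapPi m F L '' Set.range A.col := by
    rw [← Set.range_comp]
    rfl
  rw [this]
  exact finrank_span_image_le _ _

theorem sum_sum_mul_eq_dotProduct_mulVec {R m n : Type*} [CommSemiring R] [Fintype m]
    [Fintype n] (x : m → R) (A : Matrix m n R) (y : n → R) :
    ∑ i, ∑ j, x i * A i j * y j = x ⬝ᵥ (A *ᵥ y) := by
  simp [dotProduct, mulVec, Finset.mul_sum, mul_assoc]

theorem sum_sum_mul_map_eq_dotProduct_mulVec {R S m n : Type*} [CommSemiring S] [Fintype m]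
    [Fintype n] (x : m → S) (f : R → S) (A : Matrix m n R) (y : n → S) :
    ∑ i, ∑ j, x i * f (A i j) * y j = x ⬝ᵥ (A.map f *ᵥ y) :=
  sum_sum_mul_eq_dotProduct_mulVec x (A.map f) y

theorem radRight_eq_ker (n : ℕ) (Bm : Matrix (Fin n) (Fin n) (ZMod 2)) :
    radRight n Bm = LinearMap.ker Bm.mulVecLin := by
  ext y
  change (∀ x : Fin n → ZMod 2, _) ↔ _
  simp_rw [sum_sum_mul_eq_dotProduct_mulVec, dotProduct_comm _ (Bm *ᵥ y), LinearMap.mem_ker,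
    mulVecLin_apply]
  exact dotProduct_eq_zero_iff

theorem sub_finrank_radRight (n : ℕ) (Bm : Matrix (Fin n) (Fin n) (ZMod 2)) :
    n - finrank (ZMod 2) (radRight n Bm) = Bm.rank := by
  have := LinearMap.finrank_range_add_finrank_ker Bm.mulVecLin
  rw [finrank_fin_fun, ← radRight_eq_ker] at this
  rw [Matrix.rank]
  omega

theorem exists_span_algebraMapPi_of_forall_lt_rank {p : ℕ} [Fact p.Prime] {K : Type*} [Field K]
    [IsAlgClosed K] [CharP K p] [Algebra (ZMod p) K] {m n : Type*} [Fintype m] [Fintype n]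
    (A : Matrix m n (ZMod p)) {x : m → K} {y : n → K}
    (hxy : ∀ l < (A.map (algebraMap (ZMod p) K)).rank,
      x ⬝ᵥ (A.map (algebraMap (ZMod p) K) *ᵥ (piFrobenius n K p)^[l] y) = 0) :
    ∃ W : Submodule (ZMod p) (n → ZMod p),
      (∀ z ∈ span K (algebraMapPi n (ZMod p) K '' W),
        x ⬝ᵥ (A.map (algebraMap (ZMod p) K) *ᵥ z) = 0) ∧
      y ∈ span K (algebraMapPi n (ZMod p) K '' W) := by
  let F := piFrobenius m K p
  let u := A.map (algebraMap (ZMod p) K) *ᵥ y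
  set P := spanPrefix K (F^[·] u) (A.map (algebraMap (ZMod p) K)).rank
  have hP (k : ℕ) : F^[k] u ∈ P :=
    iterate_mem_spanPrefix_of_finrank_le F u (LinearMap.range (A.map _).mulVecLin)
      (fun l => ⟨_, (iterate_piFrobenius_mulVec A y l).symm⟩) le_rfl k
  have hPF : P ≤ P.comap F := span_le.mpr <| by
    rintro _ ⟨i, rfl⟩
    rw [SetLike.mem_coe, mem_comap, ← Function.iterate_succ_apply' F]
    exact hP _
  have hPx : P ≤ LinearMap.ker (dotProductBilin K K x) := span_le.mpr <| by
    rintro _ ⟨i, rfl⟩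
    simp only [SetLike.mem_coe, LinearMap.mem_ker, dotProductBilin_apply_apply, F, u,
      iterate_piFrobenius_mulVec]
    exact hxy i i.2
  set T := P.comap (A.map (algebraMap (ZMod p) K)).mulVecLin
  have hT : T ≤ T.comap (piFrobenius n K p) := fun z hz => by
    rw [mem_comap, mem_comap, mulVecLin_apply, mulVec_piFrobenius]
    exact hPF hz
  refine ⟨(T.restrictScalars (ZMod p)).comap (algebraMapPi n (ZMod p) K), ?_, ?_⟩ <;>
    rw [span_algebraMapPi_comap_eq hT]
  · exact fun z hz => by simpa using hPx hz
  · exact hP 0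

/-- the zero set, in `V_Ω × V_Ω`, of the polynomials
`B(x,y), B(x,y²), …, B(x,y^(2^(h−1)))` (where `h = n − dim rad_r(B)`) is the union over
all `F₂`-subspaces `W ⊆ V` of `W_Ω^⊥ × W_Ω`. -/
theorem variety_of_frobenius_twisted_forms (n : ℕ) (Bm : Matrix (Fin n) (Fin n) (ZMod 2))
    (Ω : Type*) [Field Ω] [Algebra (ZMod 2) Ω] [IsAlgClosed Ω] :
    {p : (Fin n → Ω) × (Fin n → Ω) |
        ∀ l < n - Module.finrank (ZMod 2) (radRight n Bm),
          ∑ i, ∑ j, p.1 i * algebraMap (ZMod 2) Ω (Bm i j) * (p.2 j) ^ (2 ^ l) = 0}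
      = ⋃ W : Submodule (ZMod 2) (Fin n → ZMod 2),
          ({x : Fin n → Ω |
              ∀ y ∈ Submodule.span Ω
                ((fun w i => algebraMap (ZMod 2) Ω (w i)) '' (W : Set (Fin n → ZMod 2))),
              ∑ i, ∑ j, x i * algebraMap (ZMod 2) Ω (Bm i j) * y j = 0} ×ˢ
            (Submodule.span Ω
              ((fun w i => algebraMap (ZMod 2) Ω (w i)) '' (W : Set (Fin n → ZMod 2))) :
                Set (Fin n → Ω))) := by
  have : CharP Ω 2 := charP_of_injective_algebraMap' (ZMod 2) 2
  ext ⟨x, y⟩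
  simp only [← iterate_piFrobenius_apply (p := 2), ← coe_algebraMapPi,
    sum_sum_mul_map_eq_dotProduct_mulVec, sub_finrank_radRight, Set.mem_ofPred_eq,
    Set.mem_iUnion, Set.mem_prod, SetLike.mem_coe]
  constructor
  · intro hxy
    exact exists_span_algebraMapPi_of_forall_lt_rank Bm fun l hl =>
      hxy l (hl.trans_le Bm.rank_map_algebraMap_le)
  · rintro ⟨W, hx, hy⟩ l -
    exact hx _ (iterate_piFrobenius_mem_span_algebraMapPi _ hy l)
end

section
/- The sequence consisting of u_1 = Σ_{i=1}^{m+1} x_i, u_2 = Σ_{i=1}^m y_i, and the elements s_l = Σ_{i=1}^m x_i y_i^(2^l) for l = 0, 1, …, m−2 is a regular sequence in F_2[x_1, y_1, …, x_m, y_m, x_{m+1}]. -/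
/-!
Weight the variables so that each polynomial of the sequence is a monomial plus terms of strictly
smaller weight, the leading monomials being pairwise coprime; such a sequence is regular over any
commutative ring. Indeed, if `∑ₗ hₗ fₗ = 0`, the top-weight parts `tₗ` of the `hₗ` form a syzygy of
pairwise coprime monomials, hence an alternating combination `tₗ = ∑ₗ' cₗₗ' X^uₗ'` of Koszul
syzygies. Replacing `hₗ` by `hₗ − ∑ₗ' cₗₗ' fₗ'` keeps the relation, lowers its weight, and changes
the last coefficient only by an element of the ideal of the earlier `fₗ`; induction on the weight
puts that coefficient in this ideal.

Indexing the variables from `0` (`x₀, …, x_m` and `y₀, …, y_{m-1}`), the weights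
`w(x_m) = 3·2^m`, `w(x_i) = 3(2^m − 2^i)` for `i < m` and `w(y_i) = 2i + 1` single out the
leading monomials `x_m`, `y_{m-1}` and `x_l y_l^(2^l)`: the weight of `x_i y_i^(2^l)` is
`3·2^m + 2^l − 3·2^i + 2^(l+1) i`, a strictly concave function of `i` that is maximal at `i = l`.
-/

open MvPolynomial Function
open Finsupp (weight)

lemma Finsupp.le_of_le_add_of_disjoint {σ : Type*} {u μ v : σ →₀ ℕ} (h : u ≤ μ + v)
    (hd : Disjoint u.support v.support) : u ≤ μ := by
  intro x
  by_cases hx : x ∈ u.support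
  · simpa [Finsupp.notMem_support_iff.1 (Finset.disjoint_left.1 hd hx)] using h x
  · simp [Finsupp.notMem_support_iff.1 hx]

lemma Fin.pairwise_disjoint_of_label {σ : Type*} {n : ℕ} {s : Fin n → Finset σ}
    (label : σ → ℕ) (h : ∀ l, ∀ x ∈ s l, label x = l) : Pairwise (Disjoint on s) :=
  fun l l' hne => Finset.disjoint_left.2 fun x hx hx' =>
    hne (Fin.ext ((h l x hx).symm.trans (h l' x hx')))

theorem Finset.sum_sum_mul_mul_eq_zero_of_alternating {ι A : Type*} [Fintype ι] [CommRing A]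
    {c : ι → ι → A} (hdiag : ∀ i, c i i = 0) (hanti : ∀ i j, c j i = -c i j) (f : ι → A) :
    ∑ i, ∑ j, c i j * f j * f i = 0 := by
  rw [← Finset.sum_product']
  refine Finset.sum_involution (fun p _ => p.swap) (fun p _ => ?_) (fun p _ hp hswap => ?_)
    (fun p _ => Finset.mem_univ _) (fun p _ => Prod.swap_swap p)
  · rw [Prod.fst_swap, Prod.snd_swap, hanti]
    ring
  · obtain ⟨i, j⟩ := p
    obtain rfl : j = i := congrArg Prod.fst hswap
    exact absurd (by rw [hdiag, zero_mul, zero_mul]) hp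

namespace MvPolynomial

variable {σ R : Type*} [CommRing R]

section FilterTerms

open Classical in
noncomputable def filterTerms (P : (σ →₀ ℕ) → Prop) : MvPolynomial σ R →+ MvPolynomial σ R :=
  AddMonoidAlgebra.coeffAddEquiv.symm.toAddMonoidHom.comp
    ((Finsupp.filterAddHom P).comp AddMonoidAlgebra.coeffAddEquiv.toAddMonoidHom)

open Classical in
lemma coeff_filterTerms (P : (σ →₀ ℕ) → Prop) (p : MvPolynomial σ R) (μ : σ →₀ ℕ) :
    coeff μ (filterTerms P p) = if P μ then coeff μ p else 0 :=
  Finsupp.filter_apply _ _ _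

variable {P : (σ →₀ ℕ) → Prop} {p : MvPolynomial σ R} {μ : σ →₀ ℕ}

lemma of_mem_support_filterTerms (hμ : μ ∈ (filterTerms P p).support) : P μ := by
  classical
  rw [mem_support_iff, coeff_filterTerms] at hμ
  by_contra h
  exact hμ (if_neg h)

lemma mem_support_sub_filterTerms (hμ : μ ∈ (p - filterTerms P p).support) :
    μ ∈ p.support ∧ ¬ P μ := by
  classical
  rw [mem_support_iff, coeff_sub, coeff_filterTerms] at hμ
  by_cases h : P μ
  · simp [h] at hμ
  · simpa [h, mem_support_iff] using hμ

lemma filterTerms_eq_self (h : ∀ μ ∈ p.support, P μ) : filterTerms P p = p := by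
  classical
  ext μ
  rw [coeff_filterTerms, ite_eq_left_iff]
  exact fun hμ => (notMem_support_iff.1 fun hm => hμ (h μ hm)).symm

lemma filterTerms_eq_zero (h : ∀ μ ∈ p.support, ¬ P μ) : filterTerms P p = 0 := by
  classical
  ext μ
  rw [coeff_filterTerms, coeff_zero, ite_eq_right_iff]
  exact fun hμ => notMem_support_iff.1 fun hm => h μ hm hμ

lemma filterTerms_mul_monomial (P : (σ →₀ ℕ) → Prop) (p : MvPolynomial σ R) (v : σ →₀ ℕ) :
    filterTerms P (p * monomial v 1) = filterTerms (fun μ => P (μ + v)) p * monomial v 1 := by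
  classical
  ext μ
  rw [coeff_mul_monomial', coeff_filterTerms, coeff_mul_monomial']
  by_cases hv : v ≤ μ
  · simp [hv, coeff_filterTerms, tsub_add_cancel_of_le hv]
  · simp [hv]

end FilterTerms

lemma mem_span_monomial_of_mul_monomial_mem {s : Set (σ →₀ ℕ)} {v : σ →₀ ℕ}
    (hv : ∀ u ∈ s, Disjoint u.support v.support) {t : MvPolynomial σ R}
    (ht : t * monomial v 1 ∈ Ideal.span ((fun u => monomial u (1 : R)) '' s)) :
    t ∈ Ideal.span ((fun u => monomial u (1 : R)) '' s) := by
  rw [mem_ideal_span_monomial_image] at ht ⊢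
  intro μ hμ
  obtain ⟨u, hu, hle⟩ :=
    ht (μ + v) (by rwa [mem_support_iff, coeff_mul_monomial, mul_one, ← mem_support_iff])
  exact ⟨u, hu, Finsupp.le_of_le_add_of_disjoint hle (hv u hu)⟩

theorem exists_alternating_of_sum_mul_monomial_eq_zero {n : ℕ} {u : Fin n → σ →₀ ℕ}
    (hu : Pairwise (Disjoint on fun l => (u l).support))
    {t : Fin n → MvPolynomial σ R} (ht : ∑ l, t l * monomial (u l) 1 = 0) :
    ∃ c : Fin n → Fin n → MvPolynomial σ R, (∀ l, c l l = 0) ∧ (∀ l l', c l' l = -c l l') ∧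
      ∀ l, t l = ∑ l', c l l' * monomial (u l') 1 := by
  induction n with
  | zero => exact ⟨fun l => l.elim0, fun l => l.elim0, fun l => l.elim0, fun l => l.elim0⟩
  | succ n ih =>
    rw [Fin.sum_univ_castSucc] at ht
    have hlast : t (Fin.last n) ∈
        Ideal.span ((fun v => monomial v (1 : R)) '' Set.range (u ∘ Fin.castSucc)) := by
      refine mem_span_monomial_of_mul_monomial_mem (v := u (Fin.last n)) ?_ ?_
      · rintro _ ⟨l, rfl⟩
        exact hu (Fin.castSucc_lt_last l).ne
      · rw [eq_neg_of_add_eq_zero_right ht]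
        exact neg_mem (Ideal.sum_mem _ fun l _ =>
          Ideal.mul_mem_left _ _ (Ideal.subset_span ⟨_, ⟨l, rfl⟩, rfl⟩))
    rw [← Set.range_comp] at hlast
    obtain ⟨a, ha⟩ := Ideal.mem_span_range_iff_exists_fun.1 hlast
    -- with `t_last = ∑ aₗ X^uₗ`, the `tₗ + aₗ X^u_last` form a syzygy of the first `n` monomials
    obtain ⟨c, hdiag, hanti, hrep⟩ := ih (hu.comp_of_injective (Fin.castSucc_injective n))
      (t := fun l => t l.castSucc + a l * monomial (u (Fin.last n)) 1) (by
        calc _ = ∑ l : Fin n, t l.castSucc * monomial (u l.castSucc) 1 +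
              (∑ l : Fin n, a l * monomial (u l.castSucc) 1) * monomial (u (Fin.last n)) 1 := by
              rw [Finset.sum_mul, ← Finset.sum_add_distrib]
              exact Finset.sum_congr rfl fun l _ => by ring
          _ = 0 := by rw [← ht, ← ha]; rfl)
    refine ⟨Fin.snoc (fun l => Fin.snoc (c l) (-a l)) (Fin.snoc a 0), fun l => ?_,
      fun l l' => ?_, fun l => ?_⟩
    · induction l using Fin.lastCases <;> simp only [Fin.snoc_castSucc, Fin.snoc_last, hdiag]
    · induction l using Fin.lastCases <;> induction l' using Fin.lastCases <;>
        simp only [Fin.snoc_castSucc, Fin.snoc_last, neg_neg, neg_zero]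
      exact hanti _ _
    · induction l using Fin.lastCases with
      | last => simpa [Fin.sum_univ_castSucc] using ha.symm
      | cast l =>
        simp only [Fin.sum_univ_castSucc, Fin.snoc_castSucc, Fin.snoc_last, ← hrep l]
        ring

variable {w : σ → ℕ}

theorem exists_alternating_of_sum_mul_monomial_eq_zero_of_weight {n : ℕ}
    {u : Fin n → σ →₀ ℕ} (hu : Pairwise (Disjoint on fun l => (u l).support))
    {t : Fin n → MvPolynomial σ R} (ht : ∑ l, t l * monomial (u l) 1 = 0) {D : ℕ}
    (htD : ∀ l, ∀ μ ∈ (t l).support, weight w μ + weight w (u l) = D) :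
    ∃ c : Fin n → Fin n → MvPolynomial σ R, (∀ l, c l l = 0) ∧ (∀ l l', c l' l = -c l l') ∧
      (∀ l, t l = ∑ l', c l l' * monomial (u l') 1) ∧
      ∀ l l', ∀ ν ∈ (c l l').support, weight w ν + weight w (u l) + weight w (u l') = D := by
  obtain ⟨c, hdiag, hanti, hrep⟩ := exists_alternating_of_sum_mul_monomial_eq_zero hu ht
  let P l l' (ν : σ →₀ ℕ) : Prop := weight w ν + weight w (u l) + weight w (u l') = D
  have hP : ∀ l l', P l' l = P l l' := fun l l' => by
    funext ν
    simp only [P, add_right_comm]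
  refine ⟨fun l l' => filterTerms (P l l') (c l l'), fun l => by simp [hdiag],
    fun l l' => by simp [hanti l l', hP], fun l => ?_, fun l l' ν hν => of_mem_support_filterTerms hν⟩
  rw [← filterTerms_eq_self (htD l), hrep l, map_sum]
  refine Finset.sum_congr rfl fun l' _ => ?_
  have hshift : (fun ν => weight w (ν + u l') + weight w (u l) = D) = P l l' := by
    funext ν
    simp only [P, map_add, add_right_comm]
  rw [filterTerms_mul_monomial, hshift]

variable (w) in
def HasLeadingMonomial (f : MvPolynomial σ R) (u : σ →₀ ℕ) : Prop :=
  ∀ μ ∈ (f - monomial u 1).support, weight w μ < weight w u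

theorem hasLeadingMonomial_sum_monomial {ι : Type*} [Fintype ι] {v : ι → σ →₀ ℕ} {j : ι}
    (hv : ∀ i ≠ j, weight w (v i) < weight w (v j)) :
    HasLeadingMonomial w (∑ i, monomial (v i) (1 : R)) (v j) := by
  classical
  intro μ hμ
  rw [← Finset.add_sum_erase _ _ (Finset.mem_univ j), add_sub_cancel_left] at hμ
  obtain ⟨i, hi, hμi⟩ := Finset.mem_biUnion.1 (support_sum hμ)
  rw [Finset.mem_singleton.1 (support_monomial_subset hμi)]
  exact hv i (Finset.ne_of_mem_erase hi)

namespace HasLeadingMonomial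

variable {f : MvPolynomial σ R} {u : σ →₀ ℕ} {D : ℕ}

lemma weight_lt_of_mem_support_mul {p : MvPolynomial σ R} (hf : HasLeadingMonomial w f u)
    (hp : ∀ α ∈ p.support, weight w α + weight w u ≤ D)
    {μ : σ →₀ ℕ} (hμ : μ ∈ (p * (f - monomial u 1)).support) : weight w μ < D := by
  classical
  obtain ⟨α, hα, β, hβ, rfl⟩ := Finset.mem_add.1 (support_mul _ _ hμ)
  have := hp α hα
  have := hf β hβ
  rw [map_add]
  omega

lemma filterTerms_mul {h : MvPolynomial σ R} (hf : HasLeadingMonomial w f u)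
    (hh : ∀ μ ∈ h.support, weight w μ + weight w u ≤ D) :
    filterTerms (weight w · = D) (h * f) =
      filterTerms (fun μ => weight w μ + weight w u = D) h * monomial u 1 := by
  have hsplit : h * f = h * monomial u 1 + h * (f - monomial u 1) := by ring
  rw [hsplit, map_add, filterTerms_mul_monomial,
    filterTerms_eq_zero fun μ hμ => (hf.weight_lt_of_mem_support_mul hh hμ).ne, add_zero]
  simp only [map_add]

end HasLeadingMonomial

theorem weight_add_lt_of_mem_support_sub_sum {ι : Type*} [Fintype ι] {f : ι → MvPolynomial σ R}
    {u : ι → σ →₀ ℕ} (hf : ∀ i, HasLeadingMonomial w (f i) (u i)) {v : σ →₀ ℕ} {D : ℕ}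
    {h : MvPolynomial σ R} (hh : ∀ μ ∈ h.support, weight w μ + weight w v ≤ D)
    {c : ι → MvPolynomial σ R}
    (hc : ∀ i, ∀ ν ∈ (c i).support, weight w ν + weight w v + weight w (u i) ≤ D)
    (hrep : filterTerms (fun μ => weight w μ + weight w v = D) h = ∑ i, c i * monomial (u i) 1)
    {μ : σ →₀ ℕ} (hμ : μ ∈ (h - ∑ i, c i * f i).support) : weight w μ + weight w v < D := by
  classical
  have hsplit : h - ∑ i, c i * f i = (h - filterTerms (fun μ => weight w μ + weight w v = D) h) -
      ∑ i, c i * (f i - monomial (u i) 1) := by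
    simp only [hrep, mul_sub, Finset.sum_sub_distrib]
    ring
  rw [hsplit] at hμ
  rcases Finset.mem_union.1 (support_sub σ _ _ hμ) with hμ | hμ
  · obtain ⟨hμh, hμD⟩ := mem_support_sub_filterTerms hμ
    exact lt_of_le_of_ne (hh μ hμh) hμD
  · obtain ⟨i, -, hμ⟩ := Finset.mem_biUnion.1 (support_sum hμ)
    have := (hf i).weight_lt_of_mem_support_mul (D := D - weight w v)
      (fun ν hν => by have := hc i ν hν; omega) hμ
    omega

section LeadingMonomials

variable {n : ℕ} {f : Fin (n + 1) → MvPolynomial σ R} {u : Fin (n + 1) → σ →₀ ℕ}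

theorem mem_span_init_of_sum_mul_eq_zero_of_bound (hf : ∀ l, HasLeadingMonomial w (f l) (u l))
    (hu : Pairwise (Disjoint on fun l => (u l).support)) (B : ℕ) {h : Fin (n + 1) → MvPolynomial σ R}
    (hB : ∀ l, ∀ μ ∈ (h l).support, weight w μ + weight w (u l) < B)
    (hsum : ∑ l, h l * f l = 0) :
    h (Fin.last n) ∈ Ideal.span (Set.range (Fin.init f)) := by
  induction B generalizing h with
  | zero =>
    rw [(support_eq_empty.1 (Finset.eq_empty_of_forall_notMem fun μ hμ =>
      Nat.not_lt_zero _ (hB _ μ hμ)))]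
    exact zero_mem _
  | succ D ih =>
    have hB' l μ (hμ : μ ∈ (h l).support) := Nat.lt_succ_iff.1 (hB l μ hμ)
    let t l := filterTerms (fun μ => weight w μ + weight w (u l) = D) (h l)
    have htop : ∑ l, t l * monomial (u l) 1 = 0 := by
      rw [← Finset.sum_congr rfl fun l _ => (hf l).filterTerms_mul (hB' l), ← map_sum, hsum,
        map_zero]
    obtain ⟨c, hdiag, hanti, hrep, hc⟩ := exists_alternating_of_sum_mul_monomial_eq_zero_of_weight
      hu htop fun l μ hμ => of_mem_support_filterTerms hμ
    let h' l := h l - ∑ l', c l l' * f l'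
    have hsum' : ∑ l, h' l * f l = 0 := by
      simp only [h', sub_mul, Finset.sum_sub_distrib, hsum, Finset.sum_mul,
        Finset.sum_sum_mul_mul_eq_zero_of_alternating hdiag hanti, sub_zero]
    have hB'' : ∀ l, ∀ μ ∈ (h' l).support, weight w μ + weight w (u l) < D := fun l _ hμ =>
      weight_add_lt_of_mem_support_sub_sum hf (hB' l) (fun l' ν hν => (hc l l' ν hν).le)
        (hrep l) hμ
    have hlast : h (Fin.last n) =
        h' (Fin.last n) + ∑ l : Fin n, c (Fin.last n) l.castSucc * Fin.init f l := by
      simp [h', Fin.sum_univ_castSucc, hdiag, Fin.init]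
    rw [hlast]
    exact add_mem (ih hB'' hsum') (Ideal.sum_mem _ fun l _ =>
      Ideal.mul_mem_left _ _ (Ideal.subset_span ⟨l, rfl⟩))

theorem mem_span_init_of_sum_mul_eq_zero (hf : ∀ l, HasLeadingMonomial w (f l) (u l))
    (hu : Pairwise (Disjoint on fun l => (u l).support)) {h : Fin (n + 1) → MvPolynomial σ R}
    (hsum : ∑ l, h l * f l = 0) : h (Fin.last n) ∈ Ideal.span (Set.range (Fin.init f)) :=
  mem_span_init_of_sum_mul_eq_zero_of_bound hf hu
    ((Finset.univ.sup fun l => (h l).support.sup fun μ => weight w μ + weight w (u l)) + 1)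
    (fun l _ hμ => Nat.lt_succ_of_le <|
      (Finset.le_sup (f := fun μ => weight w μ + weight w (u l)) hμ).trans
        (Finset.le_sup (f := fun l => (h l).support.sup fun μ => weight w μ + weight w (u l))
          (Finset.mem_univ l))) hsum

theorem mem_span_init_of_mul_mem_span_init (hf : ∀ l, HasLeadingMonomial w (f l) (u l))
    (hu : Pairwise (Disjoint on fun l => (u l).support)) {g : MvPolynomial σ R}
    (hg : f (Fin.last n) * g ∈ Ideal.span (Set.range (Fin.init f))) :
    g ∈ Ideal.span (Set.range (Fin.init f)) := by
  obtain ⟨a, ha⟩ := Ideal.mem_span_range_iff_exists_fun.1 hg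
  have := mem_span_init_of_sum_mul_eq_zero hf hu (h := Fin.snoc a (-g)) (by
    simp only [Fin.sum_univ_castSucc, Fin.snoc_castSucc, Fin.snoc_last]
    rw [show ∑ l : Fin n, a l * f l.castSucc = f (Fin.last n) * g from ha]
    ring)
  simpa using this

end LeadingMonomials

theorem isWeaklyRegular_ofFn_of_hasLeadingMonomial {n : ℕ} {f : Fin n → MvPolynomial σ R}
    {u : Fin n → σ →₀ ℕ} (hf : ∀ l, HasLeadingMonomial w (f l) (u l))
    (hu : Pairwise (Disjoint on fun l => (u l).support)) :
    RingTheory.Sequence.IsWeaklyRegular (MvPolynomial σ R) (List.ofFn f) := by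
  refine ⟨fun i hi => ?_⟩
  rw [List.length_ofFn] at hi
  rw [isSMulRegular_quotient_iff_mem_of_smul_mem, smul_eq_mul, Ideal.mul_top,
    ← Fin.ofFn_take_eq_take_ofFn hi.le, Ideal.ofList, List.getElem_ofFn]
  simp only [List.mem_ofFn', Set.ofPred_mem_eq]
  exact fun g hg => mem_span_init_of_mul_mem_span_init
    (f := fun l : Fin (i + 1) => f (Fin.castLE hi l)) (fun l => hf _)
    (hu.comp_of_injective (Fin.castLE_injective hi)) hg

theorem isRegular_ofFn_of_hasLeadingMonomial [Nontrivial R] {n : ℕ}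
    {f : Fin n → MvPolynomial σ R} {u : Fin n → σ →₀ ℕ}
    (hf : ∀ l, HasLeadingMonomial w (f l) (u l))
    (hu : Pairwise (Disjoint on fun l => (u l).support)) (hf₀ : ∀ l, constantCoeff (f l) = 0) :
    RingTheory.Sequence.IsRegular (MvPolynomial σ R) (List.ofFn f) := by
  refine ⟨isWeaklyRegular_ofFn_of_hasLeadingMonomial hf hu, fun htop => one_ne_zero (α := R) ?_⟩
  have hle : Ideal.ofList (List.ofFn f) ≤ RingHom.ker (constantCoeff (σ := σ) (R := R)) := by
    rw [Ideal.ofList, Ideal.span_le]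
    intro r hr
    obtain ⟨l, rfl⟩ := (List.mem_ofFn' _ _).1 hr
    exact hf₀ l
  rw [smul_eq_mul, Ideal.mul_top] at htop
  simpa using hle (htop ▸ Submodule.mem_top : (1 : MvPolynomial σ R) ∈ _)

end MvPolynomial

lemma Nat.three_mul_two_pow_add_lt {i l : ℕ} (h : i ≠ l) :
    3 * 2 ^ l + 2 ^ (l + 1) * i < 3 * 2 ^ i + 2 ^ (l + 1) * l := by
  rcases Nat.lt_or_gt_of_ne h with h | h
  · obtain ⟨k, rfl⟩ := Nat.exists_eq_add_of_lt h
    have ha : 0 < 2 ^ i := by positivity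
    rw [show 2 ^ (i + k + 1) = 2 ^ i * 2 ^ k * 2 by ring,
      show 2 ^ (i + k + 1 + 1) = 2 ^ i * 2 ^ k * 4 by ring]
    generalize 2 ^ i = a at *
    rcases k with _ | k
    · nlinarith
    · generalize 2 ^ (k + 1) = p
      nlinarith [Nat.zero_le (a * p * k), Nat.zero_le (a * p)]
  · obtain ⟨k, rfl⟩ := Nat.exists_eq_add_of_lt h
    have : k + 1 < 2 ^ (k + 1) := Nat.lt_two_pow_self
    have : 0 < 2 ^ l := by positivity
    rw [show 2 ^ (l + k + 1) = 2 ^ l * 2 ^ (k + 1) by ring, pow_succ]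
    nlinarith

namespace OddCase

variable (m : ℕ) {R : Type*} [CommRing R]

def weight : Fin (m + 1) ⊕ Fin m → ℕ :=
  Sum.elim (fun i => if (i : ℕ) = m then 3 * 2 ^ m else 3 * (2 ^ m - 2 ^ (i : ℕ)))
    fun i => 2 * i + 1

/-- The position in the sequence of the polynomial whose leading monomial involves `x`. -/
def label : Fin (m + 1) ⊕ Fin m → ℕ :=
  Sum.elim (fun i => if (i : ℕ) = m then 0 else i + 2) fun i => if (i : ℕ) = m - 1 then 1 else i + 2

lemma hasLeadingMonomial_sum_X_inl :
    HasLeadingMonomial (weight m) (∑ i : Fin (m + 1), (X (Sum.inl i) : MvPolynomial _ R))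
      (Finsupp.single (Sum.inl (Fin.last m) : Fin (m + 1) ⊕ Fin m) 1) := by
  refine hasLeadingMonomial_sum_monomial fun i hi => ?_
  have hi : (i : ℕ) ≠ m := fun h => hi (Fin.ext h)
  simp [weight, Finsupp.weight_single, hi]

lemma hasLeadingMonomial_sum_X_inr (hm : 0 < m) :
    HasLeadingMonomial (weight m)
      (∑ i : Fin m, (X (Sum.inr i) : MvPolynomial (Fin (m + 1) ⊕ Fin m) R))
      (Finsupp.single (Sum.inr ⟨m - 1, by omega⟩) 1) := by
  refine hasLeadingMonomial_sum_monomial fun i hi => ?_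
  have hi : (i : ℕ) ≠ m - 1 := fun h => hi (Fin.ext h)
  simp [weight, Finsupp.weight_single]
  omega

lemma hasLeadingMonomial_sum_X_mul_X_pow {l : ℕ} (hl : l < m) :
    HasLeadingMonomial (weight m)
      (∑ i : Fin m, (X (Sum.inl i.castSucc) * X (Sum.inr i) ^ 2 ^ l : MvPolynomial _ R))
      (Finsupp.single (Sum.inl (Fin.castSucc ⟨l, hl⟩)) 1 +
        Finsupp.single (Sum.inr ⟨l, hl⟩) (2 ^ l)) := by
  have hmon (i : Fin m) : (X (Sum.inl i.castSucc) * X (Sum.inr i) ^ 2 ^ l : MvPolynomial _ R) =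
      monomial (Finsupp.single (Sum.inl i.castSucc) 1 + Finsupp.single (Sum.inr i) (2 ^ l)) 1 := by
    rw [X_pow_eq_monomial, X, monomial_mul, one_mul]
  simp only [hmon]
  refine hasLeadingMonomial_sum_monomial (v := fun i : Fin m =>
    Finsupp.single (Sum.inl i.castSucc) 1 + Finsupp.single (Sum.inr i) (2 ^ l)) fun i hi => ?_
  have hi : (i : ℕ) ≠ l := fun h => hi (Fin.ext h)
  have := Nat.three_mul_two_pow_add_lt hi
  have : 2 ^ (i : ℕ) < 2 ^ m := Nat.pow_lt_pow_right (by norm_num) i.2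
  have : 2 ^ l < 2 ^ m := Nat.pow_lt_pow_right (by norm_num) hl
  have : 2 ^ l * (2 * (i : ℕ) + 1) = 2 ^ (l + 1) * i + 2 ^ l := by ring
  have : 2 ^ l * (2 * l + 1) = 2 ^ (l + 1) * l + 2 ^ l := by ring
  simp [weight, Finsupp.weight_single, i.2.ne, hl.ne]
  omega

noncomputable def leadingExponent (hm : 0 < m) : Fin (m - 1 + 1 + 1) → Fin (m + 1) ⊕ Fin m →₀ ℕ :=
  Fin.cons (Finsupp.single (Sum.inl (Fin.last m)) 1) <|
    Fin.cons (Finsupp.single (Sum.inr ⟨m - 1, by omega⟩) 1) fun l : Fin (m - 1) =>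
      Finsupp.single (Sum.inl (Fin.castSucc ⟨l, by omega⟩)) 1 +
        Finsupp.single (Sum.inr ⟨l, by omega⟩) (2 ^ (l : ℕ))

lemma pairwise_disjoint_support_leadingExponent (hm : 0 < m) :
    Pairwise (Disjoint on fun l => (leadingExponent m hm l).support) := by
  refine Fin.pairwise_disjoint_of_label (label m) ?_
  simp only [leadingExponent, Fin.forall_fin_succ, Fin.cons_zero, Fin.cons_succ]
  refine ⟨by simp [label], by simp [label], fun l x hx => ?_⟩
  rcases Finset.mem_union.1 (Finsupp.support_add hx) with hx | hx <;>
    rw [Finset.mem_singleton.1 (Finsupp.support_single_subset hx)] <;> simp [label] <;> omega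

end OddCase

/-- the sequence `u₁ = Σ_{i=1}^{m+1} x_i`, `u₂ = Σ_{i=1}^m y_i`,
`s_l = Σ_{i=1}^m x_i y_i^(2^l)` (`l = 0,…,m−2`) is a regular sequence in
`F₂[x₁,y₁,…,x_m,y_m,x_{m+1}]`. -/
theorem odd_case_sequence_regular (m : ℕ) (hm : 0 < m) :
    RingTheory.Sequence.IsRegular (MvPolynomial (Fin (m + 1) ⊕ Fin m) (ZMod 2))
      ((∑ i : Fin (m + 1), (X (Sum.inl i) : MvPolynomial (Fin (m + 1) ⊕ Fin m) (ZMod 2))) ::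
        (∑ i : Fin m, X (Sum.inr i)) ::
        List.ofFn (fun l : Fin (m - 1) =>
          ∑ i : Fin m, X (Sum.inl i.castSucc) * X (Sum.inr i) ^ (2 ^ (l : ℕ)))) := by
  rw [← List.ofFn_cons, ← List.ofFn_cons]
  refine isRegular_ofFn_of_hasLeadingMonomial (w := OddCase.weight m)
    (u := OddCase.leadingExponent m hm) ?_ (OddCase.pairwise_disjoint_support_leadingExponent m hm) ?_
  · simp only [OddCase.leadingExponent, Fin.forall_fin_succ, Fin.cons_zero, Fin.cons_succ]
    exact ⟨OddCase.hasLeadingMonomial_sum_X_inl m, OddCase.hasLeadingMonomial_sum_X_inr m hm,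
      fun l => OddCase.hasLeadingMonomial_sum_X_mul_X_pow m _⟩
  · simp [Fin.forall_fin_succ]
end

section
/- Let σ_j denote the j-th elementary symmetric polynomial. Define β : F_2[u_1,…,u_{2m}] → F_2[x_1,y_1,…,x_m,y_m] by β(u_{2j}) = σ_j(y_1,…,y_m) and β(u_{2j+1}) = Σ_{i=1}^m x_i σ_j(y_1,…,ŷ_i,…,y_m) (omitting y_i). Then the images β(u_1),…,β(u_{2m}) are algebraically independent over F_2. -/
open MvPolynomial Finset

/-- Vieta's formula, evaluated at a point: `∏ (z + f t) = ∑_j e_j(f) z^(card - j)`. -/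
lemma whitney_prod_add_eq_sum_esymm_mul_pow {σ R : Type*} [CommRing R] (F : Finset σ)
    (f : σ → R) (z : R) :
    ∏ t ∈ F, (z + f t) =
      ∑ j ∈ range (F.card + 1), (∑ S ∈ powersetCard j F, ∏ t ∈ S, f t) * z ^ (F.card - j) := by
  have h := congrArg (Polynomial.eval z) (Multiset.prod_X_add_C_eq_sum_esymm (F.val.map f))
  simp only [Multiset.map_map, Function.comp, Polynomial.eval_multiset_prod,
    Polynomial.eval_finset_sum, Polynomial.eval_mul, Polynomial.eval_add, Polynomial.eval_X,
    Polynomial.eval_C, Polynomial.eval_pow, Multiset.card_map, Finset.esymm_map_val] at h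
  exact h

/-- The matrix of elementary symmetric polynomials with one variable omitted. -/
noncomputable def whitM (m : ℕ) : Matrix (Fin m) (Fin m) (MvPolynomial (Fin m) (ZMod 2)) :=
  fun j i => ∑ S ∈ powersetCard (j : ℕ) (univ.erase i), ∏ t ∈ S, X t

lemma whitney_X_add_X_self (m : ℕ) (i : Fin m) :
    (X i : MvPolynomial (Fin m) (ZMod 2)) + X i = 0 := by
  have h2 : (2 : MvPolynomial (Fin m) (ZMod 2)) = 0 := by
    rw [← map_ofNat (C : ZMod 2 →+* MvPolynomial (Fin m) (ZMod 2)) 2]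
    norm_num
    rfl
  rw [← two_mul, h2, zero_mul]

lemma whitney_X_add_X_ne_zero (m : ℕ) {i t : Fin m} (h : t ≠ i) :
    (X i : MvPolynomial (Fin m) (ZMod 2)) + X t ≠ 0 := by
  intro hc
  have := congrArg (coeff (Finsupp.single i 1)) hc
  rw [coeff_add, coeff_X_same, coeff_X, if_neg, coeff_zero, add_zero] at this
  · exact one_ne_zero this
  · intro he
    rcases (Finsupp.single_eq_single_iff _ _ _ _).1 he with ⟨h1, _⟩ | ⟨h1, _⟩
    · exact h h1
    · exact one_ne_zero h1

/-- The "Vandermonde-type" determinant is nonzero (Lagrange interpolation argument). -/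
lemma whitM_det_ne_zero (m : ℕ) : (whitM m).det ≠ 0 := by
  classical
  intro hdet
  obtain ⟨v, hv, hmv⟩ := (Matrix.exists_mulVec_eq_zero_iff).2 hdet
  obtain ⟨i₀, hi₀⟩ := Function.ne_iff.1 hv
  have hvi : v i₀ ≠ 0 := by simpa using hi₀
  apply hvi
  set z : MvPolynomial (Fin m) (ZMod 2) := X i₀ with hz
  have key : ∀ i : Fin m, ∑ j : Fin m, whitM m j i * z ^ (m - 1 - (j : ℕ)) =
      ∏ t ∈ univ.erase i, (z + X t) := by
    intro i
    have hcard : (univ.erase i).card = m - 1 := by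
      rw [Finset.card_erase_of_mem (mem_univ i), card_univ, Fintype.card_fin]
    have hm : m - 1 + 1 = m := Nat.succ_pred_eq_of_pos i.pos
    rw [whitney_prod_add_eq_sum_esymm_mul_pow, hcard, hm, ← Fin.sum_univ_eq_sum_range
      (fun j => (∑ S ∈ powersetCard j (univ.erase i), ∏ t ∈ S, X t) * z ^ (m - 1 - j))]
    rfl
  have h0 : ∑ i : Fin m, v i * ∏ t ∈ univ.erase i, (z + X t) = 0 := by
    calc ∑ i : Fin m, v i * ∏ t ∈ univ.erase i, (z + X t)
        = ∑ i : Fin m, ∑ j : Fin m, whitM m j i * v i * z ^ (m - 1 - (j:ℕ)) := by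
          refine Finset.sum_congr rfl fun i _ => ?_
          rw [← key i, Finset.mul_sum]
          refine Finset.sum_congr rfl fun j _ => by ring
      _ = ∑ j : Fin m, (∑ i : Fin m, whitM m j i * v i) * z ^ (m - 1 - (j:ℕ)) := by
          rw [Finset.sum_comm]
          refine Finset.sum_congr rfl fun j _ => by rw [Finset.sum_mul]
      _ = 0 := by
          refine Finset.sum_eq_zero fun j _ => ?_
          have := congrFun hmv j
          simp only [Matrix.mulVec, dotProduct, Pi.zero_apply] at this
          rw [this, zero_mul]
  rw [Finset.sum_eq_single i₀] at h0
  · rcases mul_eq_zero.1 h0 with h | h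
    · exact h
    · exfalso
      rw [Finset.prod_eq_zero_iff] at h
      obtain ⟨t, ht, hzt⟩ := h
      exact whitney_X_add_X_ne_zero m (Finset.ne_of_mem_erase ht) hzt
  · intro i _ hne
    have : ∏ t ∈ univ.erase i, (z + X t) = 0 := by
      apply Finset.prod_eq_zero (Finset.mem_erase.2 ⟨Ne.symm hne, mem_univ i₀⟩)
      rw [hz]; exact whitney_X_add_X_self m i₀
    rw [this, mul_zero]
  · intro h; exact absurd (mem_univ i₀) h

/-- The elementary symmetric polynomials are algebraically independent (as an `aeval`
injectivity statement), extracted from the fundamental theorem of symmetric functions. -/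
lemma whitney_esymm_aeval_injective (m : ℕ) :
    Function.Injective (aeval (fun j : Fin m => esymm (Fin m) (ZMod 2) ((j : ℕ) + 1)) :
      MvPolynomial (Fin m) (ZMod 2) →ₐ[ZMod 2] MvPolynomial (Fin m) (ZMod 2)) := by
  intro p q h
  have h1 : ∀ p : MvPolynomial (Fin m) (ZMod 2),
      (aeval fun j : Fin m => esymm (Fin m) (ZMod 2) ((j : ℕ) + 1)) p
        = ((esymmAlgHom (Fin m) (ZMod 2) m) p : MvPolynomial (Fin m) (ZMod 2)) :=
    fun p => (esymmAlgHom_apply p).symm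
  rw [h1 p, h1 q] at h
  exact esymmAlgHom_fin_injective (ZMod 2) le_rfl (Subtype.coe_injective h)

/-- The intermediate family `σ_{j+1}(y), det·x_j` is algebraically independent. -/
lemma whitney_F2_indep (m : ℕ) :
    AlgebraicIndependent (ZMod 2)
      (Sum.elim
        (fun j : Fin m =>
          ∑ S ∈ Finset.powersetCard ((j : ℕ) + 1) (Finset.univ : Finset (Fin m)),
            ∏ t ∈ S, (X (Sum.inr t) : MvPolynomial (Fin m ⊕ Fin m) (ZMod 2)))
        (fun j : Fin m =>
          rename Sum.inr (whitM m).det * X (Sum.inl j))) := by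
  classical
  rw [algebraicIndependent_iff_injective_aeval]
  set A0 := MvPolynomial (Fin m) (ZMod 2) with hA0
  set K := FractionRing A0 with hK
  set ι : A0 →+* K := algebraMap A0 K with hι'
  set T := MvPolynomial (Fin m) K with hT
  have hι : Function.Injective ι := IsFractionRing.injective A0 K
  set Δ : K := ι (whitM m).det with hΔdef
  have hΔ : Δ ≠ 0 := fun h => whitM_det_ne_zero m (hι (by rw [map_zero]; exact h))
  set Θ : MvPolynomial (Fin m ⊕ Fin m) (ZMod 2) →+* T :=
    eval₂Hom ((C : K →+* T).comp (ι.comp (C : ZMod 2 →+* A0)))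
      (Sum.elim (fun j : Fin m => C Δ⁻¹ * X j) (fun i : Fin m => C (ι (X i)))) with hΘdef
  set e : MvPolynomial (Fin m ⊕ Fin m) (ZMod 2) ≃ₐ[ZMod 2] MvPolynomial (Fin m) A0 :=
    (renameEquiv (ZMod 2) (Equiv.sumComm (Fin m) (Fin m))).trans
      (sumAlgEquiv (ZMod 2) (Fin m) (Fin m)) with hedef
  set g : A0 →+* K :=
    ι.comp (aeval (fun j : Fin m => esymm (Fin m) (ZMod 2) ((j : ℕ) + 1)) :
      A0 →ₐ[ZMod 2] A0).toRingHom with hgdef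
  have hg : Function.Injective g := hι.comp (whitney_esymm_aeval_injective m)
  have he_inl : ∀ j : Fin m, e (X (Sum.inl j)) = C (X j) := by
    intro j
    rw [hedef, AlgEquiv.trans_apply, renameEquiv_apply, rename_X]
    show sumAlgEquiv (ZMod 2) (Fin m) (Fin m) (X (Sum.inr j)) = C (X j)
    exact sumAlgEquiv_X_inr (R := ZMod 2) (S₁ := Fin m) (S₂ := Fin m) j
  have he_inr : ∀ j : Fin m, e (X (Sum.inr j)) = X j := by
    intro j
    rw [hedef, AlgEquiv.trans_apply, renameEquiv_apply, rename_X]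
    show sumAlgEquiv (ZMod 2) (Fin m) (Fin m) (X (Sum.inl j)) = X j
    exact sumAlgEquiv_X_inl (R := ZMod 2) (S₁ := Fin m) (S₂ := Fin m) j
  have he_C : ∀ r : ZMod 2, e (C r) = C (C r) := by
    intro r
    rw [hedef, AlgEquiv.trans_apply, renameEquiv_apply, rename_C]
    exact sumAlgEquiv_C_inl (R := ZMod 2) (S₁ := Fin m) (S₂ := Fin m) r
  have hΘren : ∀ q : A0, Θ (rename Sum.inr q) = C (ι q) := by
    intro q
    have h : Θ.comp (rename (R := ZMod 2) Sum.inr).toRingHom = (C : K →+* T).comp ι := by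
      apply MvPolynomial.ringHom_ext
      · intro r
        simp [hΘdef]
      · intro i
        simp [hΘdef]
    exact RingHom.congr_fun h q
  have hcomp : Θ.comp (aeval (R := ZMod 2) (Sum.elim
        (fun j : Fin m =>
          ∑ S ∈ Finset.powersetCard ((j : ℕ) + 1) (Finset.univ : Finset (Fin m)),
            ∏ t ∈ S, (X (Sum.inr t) : MvPolynomial (Fin m ⊕ Fin m) (ZMod 2)))
        (fun j : Fin m =>
          rename Sum.inr (whitM m).det * X (Sum.inl j)))).toRingHom
      = (MvPolynomial.map g).comp
          (e : MvPolynomial (Fin m ⊕ Fin m) (ZMod 2) →+* MvPolynomial (Fin m) A0) := by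
    apply MvPolynomial.ringHom_ext
    · intro r
      simp only [RingHom.coe_comp, Function.comp_apply, AlgHom.toRingHom_eq_coe,
        RingHom.coe_coe, aeval_C, algebraMap_eq, he_C, map_C]
      simp only [hΘdef, hgdef, algebraMap_eq, coe_eval₂Hom, eval₂_C, RingHom.coe_comp,
        Function.comp_apply, AlgHom.toRingHom_eq_coe, RingHom.coe_coe, aeval_C]
      rw [aeval_C]
      rfl
    · rintro (j | j)
      · -- E side
        simp only [RingHom.coe_comp, Function.comp_apply, AlgHom.toRingHom_eq_coe,
          RingHom.coe_coe, aeval_X, Sum.elim_inl]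
        rw [show ((∑ S ∈ Finset.powersetCard ((j : ℕ) + 1) (Finset.univ : Finset (Fin m)),
            ∏ t ∈ S, (X (Sum.inr t) : MvPolynomial (Fin m ⊕ Fin m) (ZMod 2)))) =
          rename Sum.inr (esymm (Fin m) (ZMod 2) ((j : ℕ) + 1)) by
            simp [esymm, map_sum, map_prod]]
        rw [hΘren, he_inl j, map_C, hgdef]
        simp only [RingHom.coe_comp, Function.comp_apply, AlgHom.toRingHom_eq_coe,
          RingHom.coe_coe]
        rw [aeval_X]
      · -- D side
        simp only [RingHom.coe_comp, Function.comp_apply, AlgHom.toRingHom_eq_coe,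
          RingHom.coe_coe, aeval_X, Sum.elim_inr]
        rw [map_mul, hΘren, he_inr j, map_X]
        have hX : Θ (X (Sum.inl j)) = C Δ⁻¹ * X j := by
          rw [hΘdef]
          simp
        rw [hX, ← mul_assoc, ← map_mul, mul_inv_cancel₀ hΔ, map_one, one_mul]
  intro p q h
  have h2 : (MvPolynomial.map g) (e p) = (MvPolynomial.map g) (e q) := by
    have hp := RingHom.congr_fun hcomp p
    have hq := RingHom.congr_fun hcomp q
    simp only [RingHom.coe_comp, Function.comp_apply, AlgHom.toRingHom_eq_coe,
      RingHom.coe_coe] at hp hq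
    rw [← hp, ← hq, h]
  exact e.injective (MvPolynomial.map_injective g hg h2)

/-- the `2m` polynomials `σ_j(y₁,…,y_m)` (`j = 1,…,m`) and
`Σ_i x_i σ_j(y₁,…,ŷ_i,…,y_m)` (`j = 0,…,m−1`), i.e. the images of the subtle
Stiefel–Whitney classes `u₁,…,u_{2m}` under restriction to `(BO₂)^m`, are algebraically
independent over `F₂` in `F₂[x₁,y₁,…,x_m,y_m]`. -/
theorem whitney_images_algebraically_independent (m : ℕ) :
    AlgebraicIndependent (ZMod 2)
      (Sum.elim
        (fun j : Fin m =>
          ∑ S ∈ Finset.powersetCard ((j : ℕ) + 1) (Finset.univ : Finset (Fin m)),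
            ∏ t ∈ S, (X (Sum.inr t) : MvPolynomial (Fin m ⊕ Fin m) (ZMod 2)))
        (fun j : Fin m =>
          ∑ i : Fin m, (X (Sum.inl i) : MvPolynomial (Fin m ⊕ Fin m) (ZMod 2)) *
            ∑ S ∈ Finset.powersetCard (j : ℕ) (Finset.univ.erase i),
              ∏ t ∈ S, X (Sum.inr t))) := by
  classical
  set N : Matrix (Fin m) (Fin m) (MvPolynomial (Fin m ⊕ Fin m) (ZMod 2)) :=
    (whitM m).map (rename Sum.inr) with hN
  set φ : MvPolynomial (Fin m ⊕ Fin m) (ZMod 2) →ₐ[ZMod 2]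
      MvPolynomial (Fin m ⊕ Fin m) (ZMod 2) :=
    aeval (Sum.elim (fun i : Fin m => ∑ i' : Fin m, N.adjugate i i' * X (Sum.inl i'))
      (fun i : Fin m => X (Sum.inr i))) with hφ
  apply AlgebraicIndependent.of_comp φ
  have hdet : N.det = rename Sum.inr (whitM m).det :=
    (RingHom.map_det (rename (R := ZMod 2) Sum.inr).toRingHom (whitM m)).symm
  have hEq : ⇑φ ∘ (Sum.elim
      (fun j : Fin m =>
          ∑ S ∈ Finset.powersetCard ((j : ℕ) + 1) (Finset.univ : Finset (Fin m)),
            ∏ t ∈ S, (X (Sum.inr t) : MvPolynomial (Fin m ⊕ Fin m) (ZMod 2)))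
      (fun j : Fin m =>
          ∑ i : Fin m, (X (Sum.inl i) : MvPolynomial (Fin m ⊕ Fin m) (ZMod 2)) *
            ∑ S ∈ Finset.powersetCard (j : ℕ) (Finset.univ.erase i),
              ∏ t ∈ S, X (Sum.inr t)))
      = Sum.elim
        (fun j : Fin m =>
          ∑ S ∈ Finset.powersetCard ((j : ℕ) + 1) (Finset.univ : Finset (Fin m)),
            ∏ t ∈ S, (X (Sum.inr t) : MvPolynomial (Fin m ⊕ Fin m) (ZMod 2)))
        (fun j : Fin m => rename Sum.inr (whitM m).det * X (Sum.inl j)) := by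
    funext x
    cases x with
    | inl j =>
      simp only [Function.comp_apply, Sum.elim_inl, hφ, map_sum, map_prod, aeval_X,
        Sum.elim_inr]
    | inr j =>
      have hNji : ∀ i : Fin m,
          (∑ S ∈ Finset.powersetCard (j : ℕ) ((Finset.univ : Finset (Fin m)).erase i),
            ∏ t ∈ S, (X (Sum.inr t) : MvPolynomial (Fin m ⊕ Fin m) (ZMod 2))) = N j i := by
        intro i
        simp only [hN, Matrix.map_apply, whitM, map_sum, map_prod, rename_X]
      simp only [Function.comp_apply, Sum.elim_inr]
      calc φ (∑ i : Fin m, (X (Sum.inl i) : MvPolynomial (Fin m ⊕ Fin m) (ZMod 2)) *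
            ∑ S ∈ Finset.powersetCard (j : ℕ) (Finset.univ.erase i),
              ∏ t ∈ S, X (Sum.inr t))
          = ∑ i : Fin m, (∑ i' : Fin m, N.adjugate i i' * X (Sum.inl i')) * N j i := by
            rw [map_sum]
            refine Finset.sum_congr rfl fun i _ => ?_
            rw [map_mul]
            congr 1
            · rw [hφ, aeval_X, Sum.elim_inl]
            · rw [← hNji i]
              simp only [hφ, map_sum, map_prod, aeval_X, Sum.elim_inr]
        _ = ∑ i : Fin m, ∑ i' : Fin m, N j i * N.adjugate i i' * X (Sum.inl i') := by
            refine Finset.sum_congr rfl fun i _ => ?_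
            rw [Finset.sum_mul]
            exact Finset.sum_congr rfl fun i' _ => by ring
        _ = ∑ i' : Fin m, ∑ i : Fin m, N j i * N.adjugate i i' * X (Sum.inl i') :=
            Finset.sum_comm
        _ = ∑ i' : Fin m, (∑ i : Fin m, N j i * N.adjugate i i') * X (Sum.inl i') := by
            exact Finset.sum_congr rfl fun i' _ => (Finset.sum_mul _ _ _).symm
        _ = ∑ i' : Fin m, (N * N.adjugate) j i' * X (Sum.inl i') := by
            exact Finset.sum_congr rfl fun i' _ => by rw [Matrix.mul_apply]
        _ = ∑ i' : Fin m, ((N.det • (1 : Matrix (Fin m) (Fin m)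
              (MvPolynomial (Fin m ⊕ Fin m) (ZMod 2)))) j i') * X (Sum.inl i') := by
            rw [Matrix.mul_adjugate]
        _ = N.det * X (Sum.inl j) := by
            rw [Finset.sum_eq_single j]
            · rw [Matrix.smul_apply, Matrix.one_apply_eq, smul_eq_mul, mul_one]
            · intro i' _ hne
              rw [Matrix.smul_apply, Matrix.one_apply_ne (Ne.symm hne), smul_zero, zero_mul]
            · intro h; exact absurd (Finset.mem_univ j) h
        _ = rename Sum.inr (whitM m).det * X (Sum.inl j) := by rw [hdet]
  rw [hEq]
  exact whitney_F2_indep m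
end

section
/- In the bigraded polynomial ring F_2[τ, u_2,…,u_{n+1}] (τ of bidegree (1)[0], u_j of bidegree ([j/2])[j]), with motivic Steenrod operations defined by the motivic Wu formula of Proposition 5.5 (Sq^k u_m = Σ_{j=0}^k C(m+j−k−1,j) u_{k−j} u_{m+j} for 0 ≤ k < m, Sq^m u_m = u_m², Sq^k u_m = 0 for k > m, with u_0 = 1, u_1 = 0), the motivic Cartan formula, and Sq^i acting trivially on τ: for any monomial w of bidegree ([m/2])[m], Sq^m w = w² and Sq^j w = 0 for all j > m. -/
/-!
Call `y` *top of weight `q` in degree `a`* if `τ^q Sq^a y = τ^⌊a/2⌋ y²` and `Sq^j y = 0` for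
`j > a`. By the Cartan formula this property is multiplicative in `(q, a)`: the only surviving
term of `Sq^{a+b}(xy)` is `τ^ε Sq^a x Sq^b y`, where `ε = 1` exactly when `a` and `b` are both
odd, i.e. exactly when `⌊a/2⌋ + ⌊b/2⌋ + ε = ⌊(a+b)/2⌋`. Both `τ` (weight `1`, degree `0`) and
each `u_j` (weight `⌊j/2⌋`, degree `j`) are top, hence so is every monomial, with weight and
degree its bidegree. For a monomial of bidegree `(⌊m/2⌋)[m]` the two powers of `τ` agree and
cancel in the domain `F₂[τ, u₂, …, u_{n+1}]`.
-/

open MvPolynomial Finset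

/-- The subtle Stiefel–Whitney class `u_i` in `F₂[τ,u₂,…,u_{n+1}]` (realised as the
polynomial ring on `Option (Fin n)`, with `τ = X none` and `u_{j+2} = X (some j)`),
with the conventions `u₀ = 1`, `u₁ = 0`, `u_i = 0` for `i > n+1`. -/
noncomputable def uv (n : ℕ) (i : ℕ) : MvPolynomial (Option (Fin n)) (ZMod 2) :=
  if i = 0 then 1
  else if h : 2 ≤ i ∧ i ≤ n + 1 then X (some ⟨i - 2, by omega⟩) else 0

section TopSq

variable {R : Type*} [CommSemiring R] (Sq : ℕ → R → R) (τ : R)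

def SatisfiesCartan : Prop :=
  ∀ k x y, Sq k (x * y) = ∑ i ∈ range (k + 1),
    τ ^ (if i % 2 = 1 ∧ (k - i) % 2 = 1 then 1 else 0) * Sq i x * Sq (k - i) y

structure IsTopSq (q a : ℕ) (y : R) : Prop where
  pow_mul_sq_eq : τ ^ q * Sq a y = τ ^ (a / 2) * y ^ 2
  sq_eq_zero_of_lt : ∀ j, a < j → Sq j y = 0

variable {Sq τ}

theorem IsTopSq.of_sq_eq_sq {a : ℕ} {y : R} (h : Sq a y = y ^ 2)
    (hv : ∀ j, a < j → Sq j y = 0) : IsTopSq Sq τ (a / 2) a y :=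
  ⟨by rw [h], hv⟩

theorem SatisfiesCartan.sq_add_mul {a b : ℕ} {x y : R} (hC : SatisfiesCartan Sq τ)
    (hx : ∀ j, a < j → Sq j x = 0) (hy : ∀ j, b < j → Sq j y = 0) :
    Sq (a + b) (x * y) =
      τ ^ (if a % 2 = 1 ∧ b % 2 = 1 then 1 else 0) * Sq a x * Sq b y := by
  rw [hC, sum_eq_single_of_mem a (mem_range.mpr (by omega)), Nat.add_sub_cancel_left]
  intro i hi hia
  rcases lt_or_gt_of_ne hia with hlt | hgt
  · rw [hy _ (by rw [mem_range] at hi; omega), mul_zero]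
  · rw [hx i hgt, mul_zero, zero_mul]

theorem SatisfiesCartan.sq_mul_eq_zero {a b j : ℕ} {x y : R} (hC : SatisfiesCartan Sq τ)
    (hx : ∀ j, a < j → Sq j x = 0) (hy : ∀ j, b < j → Sq j y = 0) (hj : a + b < j) :
    Sq j (x * y) = 0 := by
  rw [hC]
  refine sum_eq_zero fun i _ => ?_
  by_cases hia : a < i
  · rw [hx i hia, mul_zero, zero_mul]
  · rw [hy _ (by omega), mul_zero]

theorem IsTopSq.mul {q q' a b : ℕ} {x y : R} (hC : SatisfiesCartan Sq τ)
    (hx : IsTopSq Sq τ q a x) (hy : IsTopSq Sq τ q' b y) :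
    IsTopSq Sq τ (q + q') (a + b) (x * y) := by
  refine ⟨?_, fun j hj => hC.sq_mul_eq_zero hx.sq_eq_zero_of_lt hy.sq_eq_zero_of_lt hj⟩
  have hdeg : (a + b) / 2 = a / 2 + b / 2 + (if a % 2 = 1 ∧ b % 2 = 1 then 1 else 0) := by
    split_ifs <;> omega
  calc τ ^ (q + q') * Sq (a + b) (x * y)
      = τ ^ (if a % 2 = 1 ∧ b % 2 = 1 then 1 else 0) *
          ((τ ^ q * Sq a x) * (τ ^ q' * Sq b y)) := by
        rw [hC.sq_add_mul hx.sq_eq_zero_of_lt hy.sq_eq_zero_of_lt]; ring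
    _ = τ ^ ((a + b) / 2) * (x * y) ^ 2 := by
        rw [hx.pow_mul_sq_eq, hy.pow_mul_sq_eq, hdeg]; ring

theorem IsTopSq.pow {q a : ℕ} {x : R} (hx : IsTopSq Sq τ q a x) (hC : SatisfiesCartan Sq τ)
    (hone : IsTopSq Sq τ 0 0 1) (b : ℕ) : IsTopSq Sq τ (b * q) (b * a) (x ^ b) := by
  induction b with
  | zero => simpa using hone
  | succ b ih => simpa only [pow_succ, add_mul, one_mul] using ih.mul hC hx

end TopSq

theorem isTopSq_monomial {σ R : Type*} [CommSemiring R]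
    {Sq : ℕ → MvPolynomial σ R → MvPolynomial σ R} {τ : MvPolynomial σ R}
    (hC : SatisfiesCartan Sq τ) (hone : IsTopSq Sq τ 0 0 1) {p q : σ → ℕ}
    (hX : ∀ i, IsTopSq Sq τ (q i) (p i) (X i)) (d : σ →₀ ℕ) :
    IsTopSq Sq τ (Finsupp.weight q d) (Finsupp.weight p d) (monomial d 1) := by
  induction d using Finsupp.induction_linear with
  | zero => simpa using hone
  | add f g hf hg => simpa only [map_add, monomial_mul, one_mul] using hf.mul hC hg
  | single i b => simpa only [Finsupp.weight_single, smul_eq_mul, ← X_pow_eq_monomial] using (hX i).pow hC hone b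

theorem uv_zero (n : ℕ) : uv n 0 = 1 := if_pos rfl

theorem uv_add_two {n : ℕ} (j : Fin n) : uv n (j + 2) = X (some j) := by
  rw [uv, if_neg (by omega), dif_pos ⟨by omega, by omega⟩]
  congr

theorem Finsupp.sum_mul_eq_weight {σ : Type*} (w : σ → ℕ) (d : σ →₀ ℕ) :
    (d.sum fun i e => w i * e) = Finsupp.weight w d := by
  simp only [Finsupp.weight_apply, smul_eq_mul, mul_comm]

theorem sq_of_monomial_on_diagonal_general (n : ℕ)
    (Sq : ℕ → MvPolynomial (Option (Fin n)) (ZMod 2) → MvPolynomial (Option (Fin n)) (ZMod 2))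
    (hzeroth : ∀ x, Sq 0 x = x)
    (hCartan : ∀ k x y, Sq k (x * y) = ∑ i ∈ range (k + 1),
      (X none : MvPolynomial (Option (Fin n)) (ZMod 2)) ^
          (if i % 2 = 1 ∧ (k - i) % 2 = 1 then 1 else 0) * Sq i x * Sq (k - i) y)
    (hτ : ∀ k, 0 < k → Sq k (X none) = 0)
    (hdiag : ∀ m, Sq m (uv n m) = (uv n m) ^ 2)
    (htop : ∀ k m, m < k → Sq k (uv n m) = 0)
    (d : Option (Fin n) →₀ ℕ) (m : ℕ)
    (hpd : (d.sum fun o e => (o.elim 0 fun j => (j : ℕ) + 2) * e) = m)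
    (hqd : (d.sum fun o e => (o.elim 1 fun j => ((j : ℕ) + 2) / 2) * e) = m / 2) :
    Sq m (monomial d 1) = (monomial d (1 : ZMod 2)) ^ 2 ∧
      ∀ j, m < j → Sq j (monomial d 1) = 0 := by
  have huv (k : ℕ) : IsTopSq Sq (X none) (k / 2) k (uv n k) :=
    .of_sq_eq_sq (hdiag k) (fun j hj => htop j k hj)
  have hone : IsTopSq Sq (X none) 0 0 1 := uv_zero n ▸ huv 0
  have hX : ∀ o : Option (Fin n), IsTopSq Sq (X none) (o.elim 1 fun j => ((j : ℕ) + 2) / 2)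
      (o.elim 0 fun j => (j : ℕ) + 2) (X o)
    | none => ⟨by simp [hzeroth, sq], hτ⟩
    | some j => uv_add_two j ▸ huv (j + 2)
  have h := isTopSq_monomial hCartan hone hX d
  rw [← Finsupp.sum_mul_eq_weight, ← Finsupp.sum_mul_eq_weight, hpd, hqd] at h
  exact ⟨mul_left_cancel₀ (pow_ne_zero _ (X_ne_zero _)) h.pow_mul_sq_eq, h.sq_eq_zero_of_lt⟩

/-- Corollary 5.6: in `F₂[τ,u₂,…,u_{n+1}]`, with motivic Steenrod
operations given by the motivic Wu formula, the motivic Cartan formula and trivial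
action on `τ`: for any monomial `w` of bidegree `(⌊m/2⌋)[m]`, `Sq^m w = w²` and
`Sq^j w = 0` for `j > m`. -/
theorem sq_of_monomial_on_diagonal (n : ℕ)
    (Sq : ℕ → MvPolynomial (Option (Fin n)) (ZMod 2) → MvPolynomial (Option (Fin n)) (ZMod 2))
    (hadd : ∀ k x y, Sq k (x + y) = Sq k x + Sq k y)
    (hzeroth : ∀ x, Sq 0 x = x)
    (hCartan : ∀ k x y, Sq k (x * y) = ∑ i ∈ range (k + 1),
      (X none : MvPolynomial (Option (Fin n)) (ZMod 2)) ^
          (if i % 2 = 1 ∧ (k - i) % 2 = 1 then 1 else 0) * Sq i x * Sq (k - i) y)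
    (hτ : ∀ k, 0 < k → Sq k (X none) = 0)
    (hWu : ∀ k m, k < m → Sq k (uv n m) =
      ∑ j ∈ range (k + 1), (Nat.choose (m + j - k - 1) j) • (uv n (k - j) * uv n (m + j)))
    (hdiag : ∀ m, Sq m (uv n m) = (uv n m) ^ 2)
    (htop : ∀ k m, m < k → Sq k (uv n m) = 0)
    (d : Option (Fin n) →₀ ℕ) (m : ℕ)
    (hpd : (d.sum fun o e => (o.elim 0 fun j => (j : ℕ) + 2) * e) = m)
    (hqd : (d.sum fun o e => (o.elim 1 fun j => ((j : ℕ) + 2) / 2) * e) = m / 2) :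
    Sq m (monomial d 1) = (monomial d (1 : ZMod 2)) ^ 2 ∧
      ∀ j, m < j → Sq j (monomial d 1) = 0 :=
  sq_of_monomial_on_diagonal_general n Sq hzeroth hCartan hτ hdiag htop d m hpd hqd
end

section
/- Define elements θ_j(q) in F_2[u_2, u_3, …] (truncated polynomial algebra on subtle Stiefel–Whitney classes, with u_1 = 0) by the Wu/Cartan formalism starting from θ_0 = u_2, θ_{j+1} = Sq^{2^j} θ_j. Assume u_2(q) = 0 and all 'Chern classes' c_i(q) = τ^{i mod 2} u_i(q)² vanish. Then for all j ≥ 0 with 2^j + 1 ≤ n, one has θ_{j+1}(q) = Σ_{h=0}^{2^j} u_{2^j − h}(q) u_{2^j + 1 + h}(q), and consequently Σ_{h=0}^{2^j} u_{2^j−h}(q) u_{2^j+1+h}(q) = 0, i.e., u_{2^j+1}(q) = Σ_{h=0}^{2^{j−1}−1} u_{2^{j−1}−h}(q) u_{2^{j−1}+1+h}(q). -/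
/-!
Since `u₂ = 0` and each `Sq^k` is additive, every `θ_j` vanishes, so the content is the formula
`θ_{j+1} = Σ_{h=0}^{N} u_{N-h} u_{N+1+h}` with `N = 2^j`. For `j = 0` this is the Wu formula for
`Sq¹ u₂`. For the inductive step apply `Sq^{2N}` to the sum: by Cartan and the instability
relations, `Sq^{2N}(u_a u_b)` with `a + b = 2N + 1` reduces to the two terms
`τ^ε u_a² Sq^{b-1} u_b` and `τ^ε Sq^{a-1} u_a u_b²`, and the parity of `2N` makes `τ^ε` exactly
the power occurring in the Chern classes `c_a`, `c_b`, which vanish. Only the term `u₀ u_{2N+1}`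
survives, and the Wu formula for `Sq^{2N} u_{2N+1}` gives the sum for `2N`.
-/

open Finset

section SubtleClasses

variable {A : Type*} [CommRing A]

/-- The value `Sq^N u_{N+1}` given by the Wu formula. -/
def wuSum (u : ℕ → A) (N : ℕ) : A :=
  ∑ h ∈ range (N + 1), u (N - h) * u (N + 1 + h)

variable {τ : A} {u : ℕ → A} {Sq : ℕ → A → A}

theorem chern_eq_zero_of_pos (hu1 : u 1 = 0)
    (hchern : ∀ i, 2 ≤ i → τ ^ (i % 2) * u i ^ 2 = 0) (i : ℕ) (hi : 0 < i) :
    τ ^ (i % 2) * u i ^ 2 = 0 := by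
  obtain rfl | hi2 := (Nat.succ_le_of_lt hi).eq_or_lt
  · simp [hu1]
  · exact hchern i hi2

theorem sq_u_succ_eq_wuSum
    (hWu : ∀ k m, k < m → Sq k (u m) =
      ∑ j ∈ range (k + 1), (Nat.choose (m + j - k - 1) j) • (u (k - j) * u (m + j)))
    (N : ℕ) : Sq N (u (N + 1)) = wuSum u N := by
  rw [hWu N (N + 1) N.lt_succ_self]
  refine sum_congr rfl fun h _ => ?_
  rw [show N + 1 + h - N - 1 = h by omega, Nat.choose_self, one_smul]

theorem sq_mul_u_eq_zero
    (hCartan : ∀ k x y, Sq k (x * y) = ∑ i ∈ range (k + 1),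
      τ ^ (if i % 2 = 1 ∧ (k - i) % 2 = 1 then 1 else 0) * Sq i x * Sq (k - i) y)
    (hdiag : ∀ m, Sq m (u m) = u m ^ 2) (htop : ∀ k m, m < k → Sq k (u m) = 0)
    (hc : ∀ i, 0 < i → τ ^ (i % 2) * u i ^ 2 = 0)
    {a b k : ℕ} (ha : 0 < a) (hb : 0 < b) (hab : a + b = k + 1) (hk : Even k) :
    Sq k (u a * u b) = 0 := by
  obtain ⟨N, rfl⟩ := hk
  rw [hCartan]
  refine sum_eq_zero fun i _ => ?_
  rcases lt_trichotomy a i with hai | rfl | hia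
  · rw [htop i a hai, mul_zero, zero_mul]
  · rw [hdiag, show (if a % 2 = 1 ∧ (N + N - a) % 2 = 1 then 1 else 0) = a % 2 by
      split_ifs <;> omega, hc a ha, zero_mul]
  obtain rfl | hi := (Nat.le_sub_one_of_lt hia).eq_or_lt
  · rw [show N + N - (a - 1) = b by omega, hdiag,
      show (if (a - 1) % 2 = 1 ∧ b % 2 = 1 then 1 else 0) = b % 2 by split_ifs <;> omega,
      mul_right_comm, hc b hb, zero_mul]
  · rw [htop _ b (by omega), mul_zero]

theorem sq_wuSum_eq_wuSum_two_mul (hadd : ∀ k x y, Sq k (x + y) = Sq k x + Sq k y)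
    (hu0 : u 0 = 1)
    (hCartan : ∀ k x y, Sq k (x * y) = ∑ i ∈ range (k + 1),
      τ ^ (if i % 2 = 1 ∧ (k - i) % 2 = 1 then 1 else 0) * Sq i x * Sq (k - i) y)
    (hWu : ∀ k m, k < m → Sq k (u m) =
      ∑ j ∈ range (k + 1), (Nat.choose (m + j - k - 1) j) • (u (k - j) * u (m + j)))
    (hdiag : ∀ m, Sq m (u m) = u m ^ 2) (htop : ∀ k m, m < k → Sq k (u m) = 0)
    (hc : ∀ i, 0 < i → τ ^ (i % 2) * u i ^ 2 = 0) (N : ℕ) :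
    Sq (2 * N) (wuSum u N) = wuSum u (2 * N) := by
  have hvanish : ∀ h ∈ range N, Sq (2 * N) (u (N - h) * u (N + 1 + h)) = 0 := fun h hh =>
    have hh : h < N := mem_range.mp hh
    sq_mul_u_eq_zero hCartan hdiag htop hc (by omega) (by omega) (by omega) (even_two_mul N)
  rw [wuSum, ← AddMonoidHom.mk'_apply (Sq (2 * N)) (hadd _), map_sum]
  simp only [AddMonoidHom.mk'_apply]
  rw [sum_range_succ, sum_eq_zero hvanish, zero_add, Nat.sub_self, hu0, one_mul,
    show N + 1 + N = 2 * N + 1 by omega, sq_u_succ_eq_wuSum hWu]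

theorem eq_zero_of_iterate_sq (hadd : ∀ k x y, Sq k (x + y) = Sq k x + Sq k y) {θ : ℕ → A}
    (hθ0 : θ 0 = 0) (hθs : ∀ j, θ (j + 1) = Sq (2 ^ j) (θ j)) (j : ℕ) : θ j = 0 := by
  induction j with
  | zero => exact hθ0
  | succ j ih => rw [hθs, ih, ← AddMonoidHom.mk'_apply (Sq _) (hadd _), map_zero]

end SubtleClasses

theorem subtle_class_relations_general (A : Type*) [CommRing A] (n : ℕ)
    (τ : A) (u : ℕ → A)
    (hu0 : u 0 = 1) (hu1 : u 1 = 0)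
    (Sq : ℕ → A → A)
    (hadd : ∀ k x y, Sq k (x + y) = Sq k x + Sq k y)
    (hCartan : ∀ k x y, Sq k (x * y) = ∑ i ∈ range (k + 1),
      τ ^ (if i % 2 = 1 ∧ (k - i) % 2 = 1 then 1 else 0) * Sq i x * Sq (k - i) y)
    (hWu : ∀ k m, k < m → Sq k (u m) =
      ∑ j ∈ range (k + 1), (Nat.choose (m + j - k - 1) j) • (u (k - j) * u (m + j)))
    (hdiag : ∀ m, Sq m (u m) = (u m) ^ 2)
    (htop : ∀ k m, m < k → Sq k (u m) = 0)
    (hu2 : u 2 = 0)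
    (hchern : ∀ i, 2 ≤ i → τ ^ (i % 2) * (u i) ^ 2 = 0)
    (θ : ℕ → A) (hθ0 : θ 0 = u 2) (hθs : ∀ j, θ (j + 1) = Sq (2 ^ j) (θ j)) :
    ∀ j, 2 ^ j + 1 ≤ n →
      θ (j + 1) = (∑ h ∈ range (2 ^ j + 1), u (2 ^ j - h) * u (2 ^ j + 1 + h)) ∧
      (∑ h ∈ range (2 ^ j + 1), u (2 ^ j - h) * u (2 ^ j + 1 + h)) = 0 := by
  have hc := chern_eq_zero_of_pos hu1 hchern
  have hθ : ∀ j, θ (j + 1) = wuSum u (2 ^ j) := by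
    intro j
    induction j with
    | zero => rw [hθs, hθ0, pow_zero, sq_u_succ_eq_wuSum hWu]
    | succ j ih =>
      rw [hθs, ih, pow_succ', sq_wuSum_eq_wuSum_two_mul hadd hu0 hCartan hWu hdiag htop hc]
  intro j _
  exact ⟨hθ j, (hθ j).symm.trans (eq_zero_of_iterate_sq hadd (hθ0.trans hu2) hθs (j + 1))⟩

/-- Proposition 10.1: in a commutative `F₂`-algebra (the motivic
cohomology of the Čech simplicial scheme of a quadratic form `q ∈ I³` of dimension `n`)
with classes `u_i = u_i(q)`, `u₀ = 1`, `u₁ = 0`, `u_i = 0` for `i > n`, an element `τ`,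
and Steenrod operations satisfying the motivic Wu and Cartan formulas and acting
trivially on `τ`; if `u₂ = 0` and all Chern classes `c_i = τ^(i mod 2) u_i²` vanish,
then `θ_{j+1} = Σ_{h=0}^{2^j} u_{2^j−h} u_{2^j+1+h}` and this sum vanishes. -/
theorem subtle_class_relations (A : Type*) [CommRing A] (n : ℕ)
    (τ : A) (u : ℕ → A)
    (hu0 : u 0 = 1) (hu1 : u 1 = 0) (hutop : ∀ i, n < i → u i = 0)
    (Sq : ℕ → A → A)
    (hadd : ∀ k x y, Sq k (x + y) = Sq k x + Sq k y)
    (hzeroth : ∀ x, Sq 0 x = x)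
    (hCartan : ∀ k x y, Sq k (x * y) = ∑ i ∈ range (k + 1),
      τ ^ (if i % 2 = 1 ∧ (k - i) % 2 = 1 then 1 else 0) * Sq i x * Sq (k - i) y)
    (hτ : ∀ k, 0 < k → Sq k τ = 0)
    (hWu : ∀ k m, k < m → Sq k (u m) =
      ∑ j ∈ range (k + 1), (Nat.choose (m + j - k - 1) j) • (u (k - j) * u (m + j)))
    (hdiag : ∀ m, Sq m (u m) = (u m) ^ 2)
    (htop : ∀ k m, m < k → Sq k (u m) = 0)
    (hu2 : u 2 = 0)
    (hchern : ∀ i, 2 ≤ i → τ ^ (i % 2) * (u i) ^ 2 = 0)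
    (θ : ℕ → A) (hθ0 : θ 0 = u 2) (hθs : ∀ j, θ (j + 1) = Sq (2 ^ j) (θ j)) :
    ∀ j, 2 ^ j + 1 ≤ n →
      θ (j + 1) = (∑ h ∈ range (2 ^ j + 1), u (2 ^ j - h) * u (2 ^ j + 1 + h)) ∧
      (∑ h ∈ range (2 ^ j + 1), u (2 ^ j - h) * u (2 ^ j + 1 + h)) = 0 :=
  subtle_class_relations_general A n τ u hu0 hu1 Sq hadd hCartan hWu hdiag htop hu2 hchern θ hθ0 hθs
end

section
/- With t, h, θ_j, ρ_j as defined (t(u_i) = w_i, t(τ) = 1, t kills positive Milnor K-theory; h multiplies the u-monomial corresponding to a w-monomial by the appropriate power of τ to land in bidegree ([p/2])[p]; θ_0 = u_2, θ_{j+1} = Sq^{2^j}θ_j motivically; ρ_0 = w_2, ρ_{j+1} = Sq^{2^j}ρ_j topologically): for every j, t(θ_j) = ρ_j and h(ρ_j) = θ_j. -/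
open MvPolynomial Finset

/-- `w_i ∈ F₂[w₂,…,w_n]` (variables indexed by `Fin (n−1)`, variable `j` is `w_{j+2}`),
with `w₀ = 1`, `w₁ = 0`, `w_i = 0` for `i > n`. -/
noncomputable def wv (n : ℕ) (i : ℕ) : MvPolynomial (Fin (n - 1)) (ZMod 2) :=
  if i = 0 then 1
  else if h : 2 ≤ i ∧ i ≤ n then X ⟨i - 2, by omega⟩ else 0

/-- `u_i ∈ F₂[τ,u₂,…,u_n]` (variables indexed by `Option (Fin (n−1))`, `τ = X none`,
`u_{j+2} = X (some j)`), with `u₀ = 1`, `u₁ = 0`, `u_i = 0` for `i > n`. -/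
noncomputable def uvn (n : ℕ) (i : ℕ) : MvPolynomial (Option (Fin (n - 1))) (ZMod 2) :=
  if i = 0 then 1
  else if h : 2 ≤ i ∧ i ≤ n then X (some ⟨i - 2, by omega⟩) else 0

/-- Topological degree of a `u`-monomial. -/
def pDeg {n : ℕ} (d : Fin n →₀ ℕ) : ℕ := d.sum fun j e => ((j : ℕ) + 2) * e

/-- Weight degree of a `u`-monomial. -/
def qDeg {n : ℕ} (d : Fin n →₀ ℕ) : ℕ := d.sum fun j e => (((j : ℕ) + 2) / 2) * e

/-- The additive map `h : F₂[w₂,…,w_n] → F₂[τ,u₂,…,u_n]`,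
`x ↦ τ^(⌊p/2⌋−q)·i(x)` on monomials. -/
noncomputable def hMap {n : ℕ} (x : MvPolynomial (Fin n) (ZMod 2)) :
    MvPolynomial (Option (Fin n)) (ZMod 2) :=
  ∑ d ∈ x.support,
    X none ^ (pDeg d / 2 - qDeg d) * monomial (d.mapDomain Option.some) 1

/-- The ring homomorphism `t : F₂[τ,u₂,…,u_n] → F₂[w₂,…,w_n]`, `τ ↦ 1`, `u_j ↦ w_j`
(killing the positive part of Milnor K-theory, which is absent here). -/
noncomputable def tMap {n : ℕ} :
    MvPolynomial (Option (Fin n)) (ZMod 2) →ₐ[ZMod 2] MvPolynomial (Fin n) (ZMod 2) :=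
  aeval fun o => o.elim 1 X

/-!
`t` is a ring map with `t(τ) = 1`, so it carries the motivic Cartan and Wu formulas to the
classical ones and therefore commutes with every `Sq^k`; by induction `t(θ_j) = ρ_j`.
The motivic operations respect the bigrading in which `Sq^k` has bidegree `(k, ⌊k/2⌋)`:
in the Cartan formula the factor `τ` makes up the weight lost when both indices are odd, and
the Wu terms of the wrong weight have even binomial coefficients. Hence `θ_j` is bihomogeneous
of bidegree `(p, ⌊p/2⌋)`, and on such an element the `τ`-exponent of each monomial is
`⌊p/2⌋ - q` of its `u`-part, which is exactly what `h` puts back: `h(t(θ_j)) = θ_j`.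
-/

/-- Bidegree `(p, q)` of a generator, `p` the topological degree and `q` the weight
(the paper writes `(q)[p]`). -/
def bideg (m : ℕ) : Option (Fin m) → ℕ × ℕ :=
  fun o => o.elim (0, 1) fun i => ((i : ℕ) + 2, ((i : ℕ) + 2) / 2)

/-- The bidegree of `Sq^p`, and of the elements that `h` lifts back along `t`. -/
def chowBideg (p : ℕ) : ℕ × ℕ := (p, p / 2)

@[simp]
lemma chowBideg_zero : chowBideg 0 = 0 := rfl

lemma chowBideg_add {a b : ℕ} (h : Even a ∨ Even b) :
    chowBideg a + chowBideg b = chowBideg (a + b) := by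
  simp only [chowBideg, Prod.mk_add_mk, Prod.mk.injEq, true_and]
  rcases h with ⟨r, rfl⟩ | ⟨r, rfl⟩ <;> omega

lemma bideg_cartan {m i k : ℕ} (hik : i ≤ k) (D E : ℕ × ℕ) :
    (if i % 2 = 1 ∧ (k - i) % 2 = 1 then 1 else 0) • bideg m none +
      (D + chowBideg i) + (E + chowBideg (k - i)) = D + E + chowBideg k := by
  ext <;> simp only [bideg, chowBideg, Option.elim_none, Prod.smul_mk, smul_eq_mul, Prod.fst_add,
    Prod.snd_add] <;> split_ifs <;> omega

lemma weight_bideg {m : ℕ} (d : Option (Fin m) →₀ ℕ) :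
    Finsupp.weight (bideg m) d = (pDeg d.some, d none + qDeg d.some) := by
  rw [Finsupp.weight_apply, Finsupp.sum_option_index_smul]
  ext <;> simp [bideg, pDeg, qDeg, Finsupp.sum, Prod.fst_sum, Prod.snd_sum, mul_comm]

lemma tMap_monomial {m : ℕ} (d : Option (Fin m) →₀ ℕ) (r : ZMod 2) :
    tMap (monomial d r) = monomial d.some r := by
  rw [tMap, aeval_monomial, Finsupp.prod_option_index _ _ (fun _ => pow_zero _)
    (fun _ _ _ => pow_add _ _ _), monomial_eq]
  simp

lemma tMap_X_none {m : ℕ} : tMap (X none : MvPolynomial (Option (Fin m)) (ZMod 2)) = 1 := by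
  simp [tMap]

lemma hMap_eq_sum {m : ℕ} (x : MvPolynomial (Fin m) (ZMod 2)) :
    hMap x = (AddMonoidAlgebra.coeff x).sum fun d r =>
      monomial (Finsupp.single none (pDeg d / 2 - qDeg d) + d.mapDomain Option.some) r := by
  rw [sum_def]
  refine Finset.sum_congr rfl fun d hd => ?_
  -- over `𝔽₂` every coefficient in the support is `1`
  have hr : coeff d x = 1 := by
    have : ∀ a : ZMod 2, a ≠ 0 → a = 1 := by decide
    exact this _ (mem_support_iff.mp hd)
  rw [hr, monomial_single_add, X_pow_eq_monomial]

lemma hMap_add {m : ℕ} (x y : MvPolynomial (Fin m) (ZMod 2)) :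
    hMap (x + y) = hMap x + hMap y := by
  rw [hMap_eq_sum, hMap_eq_sum, hMap_eq_sum, AddMonoidAlgebra.coeff_add]
  exact Finsupp.sum_add_index' (fun _ => monomial_zero) fun _ => (monomial _).map_add

lemma hMap_monomial {m : ℕ} (d : Fin m →₀ ℕ) (r : ZMod 2) :
    hMap (monomial d r) =
      monomial (Finsupp.single none (pDeg d / 2 - qDeg d) + d.mapDomain Option.some) r := by
  rw [hMap_eq_sum]
  exact Finsupp.sum_single_index monomial_zero

theorem hMap_tMap_of_isWeightedHomogeneous {m p : ℕ} {x : MvPolynomial (Option (Fin m)) (ZMod 2)}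
    (hx : x.IsWeightedHomogeneous (bideg m) (chowBideg p)) : hMap (tMap x) = x := by
  induction hx using IsWeightedHomogeneous.induction_on with
  | zero => rw [map_zero, ← monomial_zero (s := 0), hMap_monomial, monomial_zero]
  | add _ _ _ _ hx hy => rw [map_add, hMap_add, hx, hy]
  | monomial d r hd =>
    rw [weight_bideg, chowBideg, Prod.mk.injEq] at hd
    suffices hexp : Finsupp.single none (pDeg d.some / 2 - qDeg d.some) +
        d.some.mapDomain Option.some = d by
      rw [tMap_monomial, hMap_monomial, hexp]
    ext (_ | i)
    · simp [Finsupp.mapDomain_of_notMem_range]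
      omega
    · simp [Finsupp.mapDomain_apply (Option.some_injective _)]

lemma uvn_zero (n : ℕ) : uvn n 0 = 1 := if_pos rfl

lemma wv_zero (n : ℕ) : wv n 0 = 1 := if_pos rfl

lemma X_some_eq_uvn (n : ℕ) (a : Fin (n - 1)) : X (some a) = uvn n ((a : ℕ) + 2) := by
  rw [uvn, if_neg (by omega), dif_pos ⟨by omega, by omega⟩]
  congr

lemma tMap_uvn (n m : ℕ) : tMap (uvn n m) = wv n m := by
  unfold uvn wv
  split_ifs <;> simp [tMap]

lemma uvn_isWeightedHomogeneous (n m : ℕ) :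
    (uvn n m).IsWeightedHomogeneous (bideg (n - 1)) (chowBideg m) := by
  unfold uvn
  split_ifs with h0 h
  · subst h0
    exact isWeightedHomogeneous_one _ _
  · convert isWeightedHomogeneous_X (ZMod 2) (bideg (n - 1)) _ using 1
    simp only [bideg, chowBideg, Option.elim_some]
    congr 1 <;> omega
  · exact isWeightedHomogeneous_zero _ _ _

lemma natCast_choose_eq_zero_of_mod_two {N j : ℕ} (hN : N % 2 = 0) (hj : j % 2 = 1) :
    (N.choose j : ZMod 2) = 0 := by
  rw [(ZMod.natCast_eq_natCast_iff _ _ _).mpr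
    (Choose.choose_modEq_choose_mod_mul_choose_div_nat (p := 2)), hN, hj]
  simp

structure IsMotivicSteenrod (n : ℕ)
    (Sq : ℕ → MvPolynomial (Option (Fin (n - 1))) (ZMod 2) →
      MvPolynomial (Option (Fin (n - 1))) (ZMod 2)) : Prop where
  add : ∀ k x y, Sq k (x + y) = Sq k x + Sq k y
  zeroth : ∀ x, Sq 0 x = x
  cartan : ∀ k x y, Sq k (x * y) = ∑ i ∈ range (k + 1),
    (X none : MvPolynomial (Option (Fin (n - 1))) (ZMod 2)) ^
      (if i % 2 = 1 ∧ (k - i) % 2 = 1 then 1 else 0) * Sq i x * Sq (k - i) y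
  tau : ∀ k, 0 < k → Sq k (X none) = 0
  wu : ∀ k m, k < m → Sq k (uvn n m) =
    ∑ j ∈ range (k + 1), (Nat.choose (m + j - k - 1) j) • (uvn n (k - j) * uvn n (m + j))
  diag : ∀ m, Sq m (uvn n m) = (uvn n m) ^ 2
  top : ∀ k m, m < k → Sq k (uvn n m) = 0

structure IsSteenrod (n : ℕ)
    (Sq : ℕ → MvPolynomial (Fin (n - 1)) (ZMod 2) → MvPolynomial (Fin (n - 1)) (ZMod 2)) :
    Prop where
  add : ∀ k x y, Sq k (x + y) = Sq k x + Sq k y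
  cartan : ∀ k x y, Sq k (x * y) = ∑ i ∈ range (k + 1), Sq i x * Sq (k - i) y
  wu : ∀ k m, k < m → Sq k (wv n m) =
    ∑ j ∈ range (k + 1), (Nat.choose (m + j - k - 1) j) • (wv n (k - j) * wv n (m + j))
  diag : ∀ m, Sq m (wv n m) = (wv n m) ^ 2
  top : ∀ k m, m < k → Sq k (wv n m) = 0

section
variable {n : ℕ}
  {SqM : ℕ → MvPolynomial (Option (Fin (n - 1))) (ZMod 2) →
    MvPolynomial (Option (Fin (n - 1))) (ZMod 2)}
  {SqT : ℕ → MvPolynomial (Fin (n - 1)) (ZMod 2) → MvPolynomial (Fin (n - 1)) (ZMod 2)}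

lemma IsMotivicSteenrod.map_zero (hM : IsMotivicSteenrod n SqM) (k : ℕ) : SqM k 0 = 0 :=
  (AddMonoidHom.mk' (SqM k) (hM.add k)).map_zero

lemma IsSteenrod.map_zero (hT : IsSteenrod n SqT) (k : ℕ) : SqT k 0 = 0 :=
  (AddMonoidHom.mk' (SqT k) (hT.add k)).map_zero

lemma IsMotivicSteenrod.map_one (hM : IsMotivicSteenrod n SqM) {k : ℕ} (hk : 0 < k) :
    SqM k 1 = 0 := by
  rw [← uvn_zero n, hM.top k 0 hk]

lemma tMap_Sq_uvn (hM : IsMotivicSteenrod n SqM) (hT : IsSteenrod n SqT) (k m : ℕ) :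
    tMap (SqM k (uvn n m)) = SqT k (wv n m) := by
  rcases lt_trichotomy k m with h | rfl | h
  · simp only [hM.wu k m h, hT.wu k m h, map_sum, map_nsmul, map_mul, tMap_uvn]
  · rw [hM.diag, hT.diag, map_pow, tMap_uvn]
  · rw [hM.top k m h, hT.top k m h, _root_.map_zero]

lemma tMap_Sq_X (hM : IsMotivicSteenrod n SqM) (hT : IsSteenrod n SqT)
    (i : Option (Fin (n - 1))) (k : ℕ) : tMap (SqM k (X i)) = SqT k (tMap (X i)) := by
  cases i with
  | some a => rw [X_some_eq_uvn, tMap_Sq_uvn hM hT, tMap_uvn]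
  | none =>
    -- `τ` and `1` have the same image under `t`, and `Sq^k` kills both for `k > 0`
    rw [tMap_X_none, ← wv_zero n, ← tMap_Sq_uvn hM hT, uvn_zero]
    rcases Nat.eq_zero_or_pos k with rfl | hk
    · rw [hM.zeroth, hM.zeroth, tMap_X_none, map_one]
    · rw [hM.tau k hk, hM.map_one hk]

theorem tMap_Sq (hM : IsMotivicSteenrod n SqM) (hT : IsSteenrod n SqT)
    (x : MvPolynomial (Option (Fin (n - 1))) (ZMod 2)) (k : ℕ) :
    tMap (SqM k x) = SqT k (tMap x) := by
  induction x using MvPolynomial.induction_on generalizing k with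
  | C a =>
    obtain rfl | rfl : a = 0 ∨ a = 1 := by decide +revert
    · rw [C_0, hM.map_zero, map_zero, hT.map_zero]
    · rw [C_1, map_one, ← uvn_zero n, ← wv_zero n, tMap_Sq_uvn hM hT]
  | add _ _ hp hq => rw [hM.add, map_add, hp, hq, map_add, hT.add]
  | mul_X _ _ hp =>
    rw [hM.cartan, map_mul, hT.cartan, map_sum]
    refine Finset.sum_congr rfl fun j _ => ?_
    rw [map_mul, map_mul, map_pow, tMap_X_none, one_pow, one_mul, hp, tMap_Sq_X hM hT]

end

def IsSqHomogeneous {m : ℕ}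
    (Sq : ℕ → MvPolynomial (Option (Fin m)) (ZMod 2) → MvPolynomial (Option (Fin m)) (ZMod 2))
    (x : MvPolynomial (Option (Fin m)) (ZMod 2)) (D : ℕ × ℕ) : Prop :=
  ∀ k, (Sq k x).IsWeightedHomogeneous (bideg m) (D + chowBideg k)

section
variable {n : ℕ}
  {Sq : ℕ → MvPolynomial (Option (Fin (n - 1))) (ZMod 2) →
    MvPolynomial (Option (Fin (n - 1))) (ZMod 2)}

lemma IsMotivicSteenrod.isWeightedHomogeneous_uvn (hM : IsMotivicSteenrod n Sq) (k m : ℕ) :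
    (Sq k (uvn n m)).IsWeightedHomogeneous (bideg (n - 1)) (chowBideg m + chowBideg k) := by
  rcases lt_trichotomy k m with h | rfl | h
  · rw [hM.wu k m h]
    refine IsWeightedHomogeneous.sum _ _ _ fun j hj => ?_
    rw [mem_range] at hj
    rw [← Nat.cast_smul_eq_nsmul (ZMod 2), smul_eq_C_mul]
    -- the bidegree of `u_{k-j} u_{m+j}` is off exactly when the Wu coefficient is even
    by_cases hodd : j % 2 = 1 ∧ (m + j - k - 1) % 2 = 0
    · rw [natCast_choose_eq_zero_of_mod_two hodd.2 hodd.1, C_0, zero_mul]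
      exact isWeightedHomogeneous_zero _ _ _
    · convert ((uvn_isWeightedHomogeneous n (k - j)).mul
        (uvn_isWeightedHomogeneous n (m + j))).C_mul _ using 1
      simp only [chowBideg, Prod.mk_add_mk, Prod.mk.injEq]
      omega
  · rw [hM.diag, sq]
    exact (uvn_isWeightedHomogeneous n k).mul (uvn_isWeightedHomogeneous n k)
  · rw [hM.top k m h]
    exact isWeightedHomogeneous_zero _ _ _

lemma IsMotivicSteenrod.isWeightedHomogeneous_X (hM : IsMotivicSteenrod n Sq)
    (i : Option (Fin (n - 1))) (k : ℕ) :
    (Sq k (X i)).IsWeightedHomogeneous (bideg (n - 1)) (bideg (n - 1) i + chowBideg k) := by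
  cases i with
  | some a => rw [X_some_eq_uvn]; exact hM.isWeightedHomogeneous_uvn k _
  | none =>
    rcases Nat.eq_zero_or_pos k with rfl | hk
    · rw [hM.zeroth, chowBideg_zero, add_zero]
      exact MvPolynomial.isWeightedHomogeneous_X _ _ _
    · rw [hM.tau k hk]
      exact isWeightedHomogeneous_zero _ _ _

lemma IsMotivicSteenrod.isSqHomogeneous_one (hM : IsMotivicSteenrod n Sq) :
    IsSqHomogeneous Sq 1 0 := fun k => by
  simpa [uvn_zero] using hM.isWeightedHomogeneous_uvn k 0

lemma IsMotivicSteenrod.isSqHomogeneous_mul (hM : IsMotivicSteenrod n Sq)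
    {x y : MvPolynomial (Option (Fin (n - 1))) (ZMod 2)} {D E : ℕ × ℕ}
    (hx : IsSqHomogeneous Sq x D) (hy : IsSqHomogeneous Sq y E) :
    IsSqHomogeneous Sq (x * y) (D + E) := fun k => by
  rw [hM.cartan]
  refine IsWeightedHomogeneous.sum _ _ _ fun i hi => ?_
  rw [← bideg_cartan (Nat.lt_succ_iff.mp (mem_range.mp hi))]
  exact (((MvPolynomial.isWeightedHomogeneous_X (ZMod 2) _ none).pow _).mul (hx i)).mul (hy (k - i))

lemma IsMotivicSteenrod.isSqHomogeneous_pow (hM : IsMotivicSteenrod n Sq)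
    {x : MvPolynomial (Option (Fin (n - 1))) (ZMod 2)} {D : ℕ × ℕ}
    (hx : IsSqHomogeneous Sq x D) (e : ℕ) : IsSqHomogeneous Sq (x ^ e) (e • D) := by
  induction e with
  | zero => simpa using hM.isSqHomogeneous_one
  | succ e ih => rw [pow_succ, succ_nsmul]; exact hM.isSqHomogeneous_mul ih hx

lemma IsMotivicSteenrod.isSqHomogeneous_monomial (hM : IsMotivicSteenrod n Sq)
    (d : Option (Fin (n - 1)) →₀ ℕ) :
    IsSqHomogeneous Sq (monomial d 1) (Finsupp.weight (bideg (n - 1)) d) := by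
  induction d using Finsupp.induction with
  | zero => simpa using hM.isSqHomogeneous_one
  | single_add i e d _ _ ih =>
    rw [monomial_single_add, map_add, Finsupp.weight_single]
    exact hM.isSqHomogeneous_mul (hM.isSqHomogeneous_pow (hM.isWeightedHomogeneous_X i) e) ih

theorem IsMotivicSteenrod.isWeightedHomogeneous (hM : IsMotivicSteenrod n Sq)
    {x : MvPolynomial (Option (Fin (n - 1))) (ZMod 2)} {D : ℕ × ℕ}
    (hx : x.IsWeightedHomogeneous (bideg (n - 1)) D) (k : ℕ) :
    (Sq k x).IsWeightedHomogeneous (bideg (n - 1)) (D + chowBideg k) := by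
  induction hx using IsWeightedHomogeneous.induction_on with
  | zero => rw [hM.map_zero]; exact isWeightedHomogeneous_zero _ _ _
  | add _ _ _ _ hx hy => rw [hM.add]; exact hx.add hy
  | monomial d r hd =>
    obtain rfl | rfl : r = 0 ∨ r = 1 := by decide +revert
    · rw [monomial_zero, hM.map_zero]; exact isWeightedHomogeneous_zero _ _ _
    · rw [← hd]; exact hM.isSqHomogeneous_monomial d k

end

def thetaDeg (j : ℕ) : ℕ := if j = 0 then 2 else 2 ^ j + 1

lemma chowBideg_thetaDeg_succ (j : ℕ) :
    chowBideg (thetaDeg j) + chowBideg (2 ^ j) = chowBideg (thetaDeg (j + 1)) := by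
  rcases j with _ | j
  · rfl
  · rw [chowBideg_add (Or.inr ((Nat.even_pow' j.succ_ne_zero).mpr even_two))]
    simp only [thetaDeg, add_eq_zero, one_ne_zero, and_false, if_false, pow_succ]
    ring_nf

theorem t_theta_eq_rho_and_h_rho_eq_theta_general (n : ℕ)
    (SqM : ℕ → MvPolynomial (Option (Fin (n - 1))) (ZMod 2) →
      MvPolynomial (Option (Fin (n - 1))) (ZMod 2))
    (hMadd : ∀ k x y, SqM k (x + y) = SqM k x + SqM k y)
    (hMzeroth : ∀ x, SqM 0 x = x)
    (hMCartan : ∀ k x y, SqM k (x * y) = ∑ i ∈ range (k + 1),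
      (X none : MvPolynomial (Option (Fin (n - 1))) (ZMod 2)) ^
          (if i % 2 = 1 ∧ (k - i) % 2 = 1 then 1 else 0) * SqM i x * SqM (k - i) y)
    (hMτ : ∀ k, 0 < k → SqM k (X none) = 0)
    (hMWu : ∀ k m, k < m → SqM k (uvn n m) =
      ∑ j ∈ range (k + 1), (Nat.choose (m + j - k - 1) j) • (uvn n (k - j) * uvn n (m + j)))
    (hMdiag : ∀ m, SqM m (uvn n m) = (uvn n m) ^ 2)
    (hMtop : ∀ k m, m < k → SqM k (uvn n m) = 0)
    (SqT : ℕ → MvPolynomial (Fin (n - 1)) (ZMod 2) → MvPolynomial (Fin (n - 1)) (ZMod 2))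
    (hTadd : ∀ k x y, SqT k (x + y) = SqT k x + SqT k y)
    (hTCartan : ∀ k x y, SqT k (x * y) = ∑ i ∈ range (k + 1), SqT i x * SqT (k - i) y)
    (hTWu : ∀ k m, k < m → SqT k (wv n m) =
      ∑ j ∈ range (k + 1), (Nat.choose (m + j - k - 1) j) • (wv n (k - j) * wv n (m + j)))
    (hTdiag : ∀ m, SqT m (wv n m) = (wv n m) ^ 2)
    (hTtop : ∀ k m, m < k → SqT k (wv n m) = 0)
    (θ : ℕ → MvPolynomial (Option (Fin (n - 1))) (ZMod 2))
    (hθ0 : θ 0 = uvn n 2) (hθs : ∀ j, θ (j + 1) = SqM (2 ^ j) (θ j))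
    (ρ : ℕ → MvPolynomial (Fin (n - 1)) (ZMod 2))
    (hρ0 : ρ 0 = wv n 2) (hρs : ∀ j, ρ (j + 1) = SqT (2 ^ j) (ρ j)) :
    ∀ j, tMap (θ j) = ρ j ∧ hMap (ρ j) = θ j := by
  have hM : IsMotivicSteenrod n SqM := ⟨hMadd, hMzeroth, hMCartan, hMτ, hMWu, hMdiag, hMtop⟩
  have hT : IsSteenrod n SqT := ⟨hTadd, hTCartan, hTWu, hTdiag, hTtop⟩
  have key : ∀ j, tMap (θ j) = ρ j ∧
      (θ j).IsWeightedHomogeneous (bideg (n - 1)) (chowBideg (thetaDeg j)) := by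
    intro j
    induction j with
    | zero => rw [hθ0, hρ0]; exact ⟨tMap_uvn n 2, uvn_isWeightedHomogeneous n 2⟩
    | succ j ih =>
      rw [hθs, hρs, tMap_Sq hM hT, ih.1, ← chowBideg_thetaDeg_succ]
      exact ⟨rfl, hM.isWeightedHomogeneous ih.2 _⟩
  exact fun j => ⟨(key j).1, (key j).1 ▸ hMap_tMap_of_isWeightedHomogeneous (key j).2⟩

/-- Lemma 7.11: `t(θ_j) = ρ_j` and `h(ρ_j) = θ_j`, where `θ₀ = u₂`,
`θ_{j+1} = Sq^{2^j} θ_j` for motivic Steenrod operations (motivic Wu and Cartan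
formulas, trivial action on `τ`) on `F₂[τ,u₂,…,u_n]` and `ρ₀ = w₂`,
`ρ_{j+1} = Sq^{2^j} ρ_j` for topological Steenrod operations (classical Wu and Cartan
formulas) on `F₂[w₂,…,w_n]`. -/
theorem t_theta_eq_rho_and_h_rho_eq_theta (n : ℕ)
    (SqM : ℕ → MvPolynomial (Option (Fin (n - 1))) (ZMod 2) →
      MvPolynomial (Option (Fin (n - 1))) (ZMod 2))
    (hMadd : ∀ k x y, SqM k (x + y) = SqM k x + SqM k y)
    (hMzeroth : ∀ x, SqM 0 x = x)
    (hMCartan : ∀ k x y, SqM k (x * y) = ∑ i ∈ range (k + 1),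
      (X none : MvPolynomial (Option (Fin (n - 1))) (ZMod 2)) ^
          (if i % 2 = 1 ∧ (k - i) % 2 = 1 then 1 else 0) * SqM i x * SqM (k - i) y)
    (hMτ : ∀ k, 0 < k → SqM k (X none) = 0)
    (hMWu : ∀ k m, k < m → SqM k (uvn n m) =
      ∑ j ∈ range (k + 1), (Nat.choose (m + j - k - 1) j) • (uvn n (k - j) * uvn n (m + j)))
    (hMdiag : ∀ m, SqM m (uvn n m) = (uvn n m) ^ 2)
    (hMtop : ∀ k m, m < k → SqM k (uvn n m) = 0)
    (SqT : ℕ → MvPolynomial (Fin (n - 1)) (ZMod 2) → MvPolynomial (Fin (n - 1)) (ZMod 2))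
    (hTadd : ∀ k x y, SqT k (x + y) = SqT k x + SqT k y)
    (hTzeroth : ∀ x, SqT 0 x = x)
    (hTCartan : ∀ k x y, SqT k (x * y) = ∑ i ∈ range (k + 1), SqT i x * SqT (k - i) y)
    (hTWu : ∀ k m, k < m → SqT k (wv n m) =
      ∑ j ∈ range (k + 1), (Nat.choose (m + j - k - 1) j) • (wv n (k - j) * wv n (m + j)))
    (hTdiag : ∀ m, SqT m (wv n m) = (wv n m) ^ 2)
    (hTtop : ∀ k m, m < k → SqT k (wv n m) = 0)
    (θ : ℕ → MvPolynomial (Option (Fin (n - 1))) (ZMod 2))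
    (hθ0 : θ 0 = uvn n 2) (hθs : ∀ j, θ (j + 1) = SqM (2 ^ j) (θ j))
    (ρ : ℕ → MvPolynomial (Fin (n - 1)) (ZMod 2))
    (hρ0 : ρ 0 = wv n 2) (hρs : ∀ j, ρ (j + 1) = SqT (2 ^ j) (ρ j)) :
    ∀ j, tMap (θ j) = ρ j ∧ hMap (ρ j) = θ j :=
  t_theta_eq_rho_and_h_rho_eq_theta_general n SqM hMadd hMzeroth hMCartan hMτ hMWu hMdiag hMtop SqT
    hTadd hTCartan hTWu hTdiag hTtop θ hθ0 hθs ρ hρ0 hρs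
end
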